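/- arXiv:math/0211146 — 9 statements merged into one kernel-verified Lean document; each statement's English description precedes it below -/
import Mathlib

section
/- Let a₁ and a₂ be coprime positive integers, let S = {μ₁a₁ + μ₂a₂ : μ₁, μ₂ ∈ ℕ} be the numerical semigroup they generate, and let f(S;X) = ∑_{m ∈ S} X^m be its generating power series. Then (1 − X^{a₁})·(1 − X^{a₂})·f(S;X) = 1 − X^{a₁a₂} in the ring ℤ[[X]] of formal power series. -/
/-!
The Apéry set of `S = ⟨a, b⟩` with respect to `b`, i.e. `S \ (S + b)`, is `{i * a | i < b}`:
an element with no `b` in a representation is `μ * a`, and `μ ≥ b` would let us trade `b * a` for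
`(a - 1) * b + b`, while `i * a ∈ S + b` with `i < b` would force `b ∣ i - μ` by coprimality.
Since every element of `S` is uniquely an Apéry element plus a multiple of `b`,
`(1 - X ^ b) f(S; X) = ∑_{i < b} X ^ (i * a)`, and multiplying by `1 - X ^ a` telescopes this
geometric sum to `1 - X ^ (a * b)`.
-/

open PowerSeries

def pairSemigroup (a b : ℕ) : Set ℕ := {n | ∃ μ₁ μ₂ : ℕ, n = μ₁ * a + μ₂ * b}

def aperySet (S : Set ℕ) (b : ℕ) : Set ℕ := S \ (· + b) '' S

theorem add_right_mem_pairSemigroup {a b n : ℕ} (hn : n ∈ pairSemigroup a b) :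
    n + b ∈ pairSemigroup a b := by
  obtain ⟨μ₁, μ₂, rfl⟩ := hn
  exact ⟨μ₁, μ₂ + 1, by ring⟩

theorem exists_mul_eq_of_mem_aperySet_pairSemigroup {a b n : ℕ} (ha : 0 < a)
    (hn : n ∈ aperySet (pairSemigroup a b) b) : ∃ i < b, i * a = n := by
  obtain ⟨⟨μ₁, μ₂, rfl⟩, hnot⟩ := hn
  obtain rfl : μ₂ = 0 := by
    rcases μ₂ with _ | k
    · rfl
    · exact (hnot ⟨μ₁ * a + k * b, ⟨μ₁, k, rfl⟩, by ring⟩).elim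
  refine ⟨μ₁, ?_, by ring⟩
  by_contra! hμ₁
  refine hnot ⟨(μ₁ - b) * a + (a - 1) * b, ⟨μ₁ - b, a - 1, rfl⟩, ?_⟩
  obtain ⟨k, rfl⟩ := Nat.exists_eq_add_of_le hμ₁
  obtain ⟨c, rfl⟩ := Nat.exists_eq_add_of_le' ha
  simp only [Nat.add_sub_cancel_left, Nat.add_sub_cancel]
  ring

theorem mul_mem_aperySet_pairSemigroup {a b i : ℕ} (hab : a.Coprime b) (hi : i < b) :
    i * a ∈ aperySet (pairSemigroup a b) b := by
  refine ⟨⟨i, 0, by ring⟩, ?_⟩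
  rintro ⟨_, ⟨μ₁, μ₂, rfl⟩, heq : μ₁ * a + μ₂ * b + b = i * a⟩
  have hμ₁ : μ₁ < i := Nat.lt_of_mul_lt_mul_right (a := a) (by nlinarith)
  have hdvd : b ∣ (i - μ₁) * a :=
    ⟨μ₂ + 1, by rw [Nat.sub_mul, mul_add, mul_one, mul_comm b]; omega⟩
  have := Nat.le_of_dvd (by omega) (hab.symm.dvd_of_dvd_mul_right hdvd)
  omega

theorem aperySet_pairSemigroup {a b : ℕ} (ha : 0 < a) (hab : a.Coprime b) :
    aperySet (pairSemigroup a b) b = ↑((Finset.range b).image (· * a)) := by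
  ext n
  simp only [Finset.coe_image, Finset.coe_range, Set.mem_image, Set.mem_Iio]
  constructor
  · exact exists_mul_eq_of_mem_aperySet_pairSemigroup ha
  · rintro ⟨i, hi, rfl⟩
    exact mul_mem_aperySet_pairSemigroup hab hi

section IndicatorSeries

variable {R : Type*} [Ring R]

theorem X_pow_mul_mk_indicator (S : Set ℕ) (b : ℕ) :
    X ^ b * mk (S.indicator 1) = mk (((· + b) '' S).indicator (1 : ℕ → R)) := by
  classical
  ext n
  have hmem : n ∈ (· + b) '' S ↔ b ≤ n ∧ n - b ∈ S := by
    constructor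
    · rintro ⟨s, hs, rfl⟩
      simpa using hs
    · rintro ⟨hbn, hs⟩
      exact ⟨n - b, hs, Nat.sub_add_cancel hbn⟩
  rw [coeff_X_pow_mul', coeff_mk, coeff_mk, Set.indicator_apply, Set.indicator_apply, hmem]
  split_ifs <;> simp_all

theorem one_sub_X_pow_mul_mk_indicator {S : Set ℕ} {b : ℕ} (hS : ∀ s ∈ S, s + b ∈ S) :
    (1 - X ^ b) * mk (S.indicator 1) = mk ((aperySet S b).indicator (1 : ℕ → R)) := by
  have hsub : (· + b) '' S ⊆ S := by
    rintro _ ⟨s, hs, rfl⟩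
    exact hS s hs
  rw [sub_mul, one_mul, X_pow_mul_mk_indicator, aperySet, Set.indicator_sdiff hsub]
  ext n
  simp

theorem mk_indicator_finset (t : Finset ℕ) :
    mk ((t : Set ℕ).indicator (1 : ℕ → R)) = ∑ m ∈ t, X ^ m := by
  ext n
  simp [coeff_X_pow, Set.indicator_apply]

end IndicatorSeries

open scoped Classical in
theorem stmt_0_general (a₁ a₂ : ℕ) (h₁ : 0 < a₁) (hcop : Nat.Coprime a₁ a₂)
    (f : PowerSeries ℤ)
    (hf : ∀ m : ℕ, PowerSeries.coeff m f =
      if ∃ μ₁ μ₂ : ℕ, m = μ₁ * a₁ + μ₂ * a₂ then 1 else 0) :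
    (1 - PowerSeries.X ^ a₁) * (1 - PowerSeries.X ^ a₂) * f
      = 1 - PowerSeries.X ^ (a₁ * a₂) := by
  have hf_indicator : f = mk ((pairSemigroup a₁ a₂).indicator 1) := by
    ext m
    simp [hf, Set.indicator_apply, pairSemigroup]
  have key : (1 - X ^ a₂) * f = ∑ i ∈ Finset.range a₂, (X ^ a₁) ^ i := by
    rw [hf_indicator, one_sub_X_pow_mul_mk_indicator fun _ ↦ add_right_mem_pairSemigroup,
      aperySet_pairSemigroup h₁ hcop, mk_indicator_finset, Finset.sum_image (mul_left_injective₀ h₁.ne').injOn]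
    simp_rw [← pow_mul, mul_comm]
  rw [mul_assoc, key, mul_neg_geom_sum, ← pow_mul]

open scoped Classical in
theorem stmt_0 (a₁ a₂ : ℕ) (h₁ : 0 < a₁) (h₂ : 0 < a₂) (hcop : Nat.Coprime a₁ a₂)
    (f : PowerSeries ℤ)
    (hf : ∀ m : ℕ, PowerSeries.coeff m f =
      if ∃ μ₁ μ₂ : ℕ, m = μ₁ * a₁ + μ₂ * a₂ then 1 else 0) :
    (1 - PowerSeries.X ^ a₁) * (1 - PowerSeries.X ^ a₂) * f
      = 1 - PowerSeries.X ^ (a₁ * a₂) :=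
  stmt_0_general a₁ a₂ h₁ hcop f hf
end

section
/- Let a₁, a₂, a₃ be positive integers with gcd(a₁, a₂, a₃) = 1, let S be the numerical semigroup they generate, and let f(S;X) = ∑_{m ∈ S} X^m. Then there exist (not necessarily distinct) non-negative integers p₁, p₂, p₃, p₄, p₅ such that (1 − X^{a₁})(1 − X^{a₂})(1 − X^{a₃})·f(S;X) = 1 − X^{p₁} − X^{p₂} − X^{p₃} + X^{p₄} + X^{p₅} in ℤ[[X]]. -/
/-!
Multiplying the generating function of `S` by `1 - X ^ a₁` leaves the generating function of the
Apéry set `{m ∈ S | m - a₁ ∉ S}`. Writing each Apéry element as `a₂ u + a₃ v` with `u` least, the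
pairs `(u, v)` form a staircase: a lower set of `ℕ × ℕ` on which `a₂ u + a₃ v` is injective. An
inner corner `(p + 1, q + 1)` of the staircase has weight a positive multiple of `a₁`. If two
corners `(p + 1, q + 1)`, `(p' + 1, q' + 1)` had different weights, the larger would exceed the
smaller by a positive multiple of `a₁`, which pushes `(p - p', q - q')` out of the staircase
although it lies below `(p, q + 1)`; so all corners have the same weight, and injectivity leaves
at most one. Hence the staircase is a rectangle `[0, c) × [0, b)` with at most one rectangle
`[e, c) × [d, b)` cut out, and multiplying its generating function by `(1 - X ^ a₂) * (1 - X ^ a₃)`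
leaves six monomials.
-/

open Finset PowerSeries

section LowerSet

variable {s : Set (ℕ × ℕ)}

def IsInnerCorner (s : Set (ℕ × ℕ)) (p q : ℕ) : Prop :=
  (p, q + 1) ∈ s ∧ (p + 1, q) ∈ s ∧ (p + 1, q + 1) ∉ s

theorem IsLowerSet.exists_isInnerCorner (hs : IsLowerSet s) {u v : ℕ} (hu : (u, 0) ∈ s)
    (hv : (0, v) ∈ s) (huv : (u, v) ∉ s) : ∃ p < u, ∃ q < v, IsInnerCorner s p q := by
  obtain ⟨u, rfl⟩ := Nat.exists_eq_add_one_of_ne_zero (by rintro rfl; exact huv hv : u ≠ 0)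
  obtain ⟨v, rfl⟩ := Nat.exists_eq_add_one_of_ne_zero (by rintro rfl; exact huv hu : v ≠ 0)
  by_cases hl : (u, v + 1) ∈ s
  · by_cases hd : (u + 1, v) ∈ s
    · exact ⟨u, by omega, v, by omega, hl, hd, huv⟩
    · obtain ⟨p, hp, q, hq, hpq⟩ := hs.exists_isInnerCorner hu (hs (by simp) hv) hd
      exact ⟨p, hp, q, by omega, hpq⟩
  · obtain ⟨p, hp, q, hq, hpq⟩ := hs.exists_isInnerCorner (hs (by simp) hu) hv hl
    exact ⟨p, by omega, q, hq, hpq⟩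
termination_by u + v

theorem IsLowerSet.eq_range_product_sdiff_Ico_product (hs : IsLowerSet s) {m n : ℕ}
    (hm : (m, 0) ∉ s) (hn : (0, n) ∉ s)
    (huniq : ∀ p q p' q', IsInnerCorner s p q → IsInnerCorner s p' q' → p = p' ∧ q = q') :
    ∃ c e b d : ℕ, e ≤ c ∧ d ≤ b ∧ s = ↑(range c ×ˢ range b \ Ico e c ×ˢ Ico d b) := by
  obtain ⟨c, hc⟩ : ∃ c, {u | (u, 0) ∈ s} = Set.Iio c :=
    (hs.preimage fun _ _ h => Prod.mk_le_mk.2 ⟨h, le_rfl⟩).eq_univ_or_Iio.resolve_left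
      fun h => hm ((Set.ext_iff.1 h m).2 trivial)
  obtain ⟨b, hb⟩ : ∃ b, {v | (0, v) ∈ s} = Set.Iio b :=
    (hs.preimage fun _ _ h => Prod.mk_le_mk.2 ⟨le_rfl, h⟩).eq_univ_or_Iio.resolve_left
      fun h => hn ((Set.ext_iff.1 h n).2 trivial)
  have hc' (u : ℕ) : (u, 0) ∈ s ↔ u < c := Set.ext_iff.1 hc u
  have hb' (v : ℕ) : (0, v) ∈ s ↔ v < b := Set.ext_iff.1 hb v
  have hrect {u v : ℕ} (h : (u, v) ∈ s) : u < c ∧ v < b :=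
    ⟨(hc' u).1 (hs (by simp) h), (hb' v).1 (hs (by simp) h)⟩
  suffices h : ∃ e ≤ c, ∃ d ≤ b, (e, d) ∉ s ∧ ∀ u < c, ∀ v < b, (u, v) ∉ s → e ≤ u ∧ d ≤ v by
    obtain ⟨e, hec, d, hdb, hed, hcut⟩ := h
    refine ⟨c, e, b, d, hec, hdb, Set.ext fun ⟨u, v⟩ => ?_⟩
    simp only [coe_sdiff, coe_product, coe_range, coe_Ico, Set.mem_sdiff, Set.mem_prod,
      Set.mem_Iio, Set.mem_Ico]
    refine ⟨fun h => ⟨hrect h, fun ⟨⟨heu, _⟩, hdv, _⟩ => hed (hs (Prod.mk_le_mk.2 ⟨heu, hdv⟩) h)⟩,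
      fun ⟨⟨hu, hv⟩, hne⟩ => by_contra fun h => ?_⟩
    obtain ⟨heu, hdv⟩ := hcut u hu v hv h
    exact hne ⟨⟨heu, hu⟩, hdv, hv⟩
  by_cases hcorner : ∃ p q, IsInnerCorner s p q
  · obtain ⟨p, q, hl, hd, hpq⟩ := hcorner
    refine ⟨p + 1, (hrect hd).1.le, q + 1, (hrect hl).2.le, hpq, fun u hu v hv huv => ?_⟩
    obtain ⟨p', hp', q', hq', h'⟩ := hs.exists_isInnerCorner ((hc' u).2 hu) ((hb' v).2 hv) huv
    obtain ⟨rfl, rfl⟩ := huniq _ _ _ _ h' ⟨hl, hd, hpq⟩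
    omega
  · refine ⟨c, le_rfl, b, le_rfl, fun h => (hrect h).1.false, fun u hu v hv huv => ?_⟩
    obtain ⟨p, -, q, -, h⟩ := hs.exists_isInnerCorner ((hc' u).2 hu) ((hb' v).2 hv) huv
    exact absurd ⟨p, q, h⟩ hcorner

end LowerSet

theorem one_sub_mul_one_sub_mul_sum_range_product_sdiff {R : Type*} [CommRing R] (x y : R)
    {c e b d : ℕ} (hec : e ≤ c) (hdb : d ≤ b) :
    (1 - x) * (1 - y) * ∑ i ∈ range c ×ˢ range b \ Ico e c ×ˢ Ico d b, x ^ i.1 * y ^ i.2 =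
      1 - x ^ c - y ^ b - x ^ e * y ^ d + x ^ c * y ^ d + x ^ e * y ^ b := by
  have hsub : Ico e c ×ˢ Ico d b ⊆ range c ×ˢ range b :=
    product_subset_product (fun _ => by simp only [mem_Ico, mem_range]; omega)
      (fun _ => by simp only [mem_Ico, mem_range]; omega)
  rw [sum_sdiff_eq_sub hsub, sum_product, sum_product, ← sum_mul_sum, ← sum_mul_sum]
  calc _ = ((∑ i ∈ Ico 0 c, x ^ i) * (1 - x)) * ((∑ j ∈ Ico 0 b, y ^ j) * (1 - y)) -
          ((∑ i ∈ Ico e c, x ^ i) * (1 - x)) * ((∑ j ∈ Ico d b, y ^ j) * (1 - y)) := by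
        simp only [range_eq_Ico]; ring
    _ = _ := by
        rw [geom_sum_Ico_mul_neg _ c.zero_le, geom_sum_Ico_mul_neg _ b.zero_le,
          geom_sum_Ico_mul_neg _ hec, geom_sum_Ico_mul_neg _ hdb]
        ring

def apery (S : Set ℕ) (a : ℕ) : Set ℕ := {m | m ∈ S ∧ ∀ s ∈ S, a + s ≠ m}

open scoped Classical in
theorem coeff_mul_one_sub_X_pow {S : Set ℕ} {a : ℕ} (hS : ∀ s ∈ S, a + s ∈ S) {f : ℤ⟦X⟧}
    (hf : ∀ m, coeff m f = if m ∈ S then 1 else 0) (m : ℕ) :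
    coeff m (f * (1 - X ^ a)) = if m ∈ apery S a then 1 else 0 := by
  rw [mul_sub, mul_one, map_sub, coeff_mul_X_pow', hf]
  by_cases ham : a ≤ m
  · obtain ⟨k, rfl⟩ := Nat.exists_eq_add_of_le ham
    have hap : a + k ∈ apery S a ↔ a + k ∈ S ∧ k ∉ S := and_congr_right fun _ =>
      ⟨fun h hk => h k hk rfl, fun hk s hs e => hk (Nat.add_left_cancel e ▸ hs)⟩
    rw [if_pos ham, Nat.add_sub_cancel_left, hf]
    by_cases hk : k ∈ S <;> simp [hap, hk, hS k]
  · have hap : m ∈ apery S a ↔ m ∈ S :=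
      ⟨And.left, fun h => ⟨h, fun s _ e => ham (e ▸ Nat.le_add_right a s)⟩⟩
    simp [ham, hap]

section Staircase

variable {a₁ a₂ a₃ : ℕ}

def semigroupOf (a₁ a₂ a₃ : ℕ) : Set ℕ :=
  {m | ∃ μ₁ μ₂ μ₃ : ℕ, m = μ₁ * a₁ + μ₂ * a₂ + μ₃ * a₃}

/- `(u, v)` lies in the staircase iff `a₂ u + a₃ v` lies in the Apéry set of the semigroup with
respect to `a₁` and `u` is least among its representations `a₂ u' + a₃ v'`. -/
def staircase (a₁ a₂ a₃ : ℕ) : Set (ℕ × ℕ) :=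
  {x | (∀ s ∈ semigroupOf a₁ a₂ a₃, a₁ + s ≠ a₂ * x.1 + a₃ * x.2) ∧
    ∀ y : ℕ × ℕ, y.1 < x.1 → a₂ * y.1 + a₃ * y.2 ≠ a₂ * x.1 + a₃ * x.2}

theorem isLowerSet_staircase : IsLowerSet (staircase a₁ a₂ a₃) := by
  rintro ⟨u', v'⟩ ⟨u, v⟩ hle ⟨hap, hmin⟩
  obtain ⟨k, rfl⟩ := Nat.exists_eq_add_of_le (Prod.mk_le_mk.1 hle).1
  obtain ⟨l, rfl⟩ := Nat.exists_eq_add_of_le (Prod.mk_le_mk.1 hle).2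
  refine ⟨fun s ⟨α, β, γ, hs⟩ h => ?_, fun ⟨y₁, y₂⟩ hy h => ?_⟩
  · exact hap (s + k * a₂ + l * a₃) ⟨α, β + k, γ + l, by rw [hs]; ring⟩
      (by simp only at h ⊢; linarith)
  · exact hmin (y₁ + k, y₂ + l) (by simp only at hy ⊢; omega) (by simp only at h ⊢; linarith)

theorem tsub_notMem_staircase {u v α β γ : ℕ}
    (h : a₂ * u + a₃ * v = (α + 1) * a₁ + a₂ * β + a₃ * γ) :
    (u - β, v - γ) ∉ staircase a₁ a₂ a₃ := by
  refine fun hD => hD.1 _ ⟨α, β - u, γ - v, rfl⟩ ?_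
  rcases le_total u β with hu | hu <;> obtain ⟨k, rfl⟩ := Nat.exists_eq_add_of_le hu <;>
  rcases le_total v γ with hv | hv <;> obtain ⟨l, rfl⟩ := Nat.exists_eq_add_of_le hv <;>
  simp only [Nat.add_sub_cancel_left, Nat.sub_eq_zero_of_le (Nat.le_add_right _ _)] <;>
  nlinarith

theorem injOn_staircase (h₃ : 0 < a₃) :
    Set.InjOn (fun x : ℕ × ℕ => a₂ * x.1 + a₃ * x.2) (staircase a₁ a₂ a₃) := by
  rintro ⟨u, v⟩ hx ⟨u', v'⟩ hx' h
  simp only at h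
  rcases lt_trichotomy u u' with hu | rfl | hu
  · exact absurd h (hx'.2 (u, v) hu)
  · rw [Nat.eq_of_mul_eq_mul_left h₃ (Nat.add_left_cancel h)]
  · exact absurd h.symm (hx.2 (u', v') hu)

theorem image_staircase :
    (fun x : ℕ × ℕ => a₂ * x.1 + a₃ * x.2) '' staircase a₁ a₂ a₃ =
      apery (semigroupOf a₁ a₂ a₃) a₁ := by
  ext m
  constructor
  · rintro ⟨⟨u, v⟩, hD, rfl⟩
    exact ⟨⟨0, u, v, by ring⟩, hD.1⟩
  · classical
    rintro ⟨⟨μ₁, μ₂, μ₃, rfl⟩, hap⟩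
    obtain rfl : μ₁ = 0 := by
      by_contra h
      obtain ⟨k, rfl⟩ := Nat.exists_eq_add_one_of_ne_zero h
      exact hap _ ⟨k, μ₂, μ₃, rfl⟩ (by ring)
    have hrep : ∃ u v, a₂ * u + a₃ * v = 0 * a₁ + μ₂ * a₂ + μ₃ * a₃ := ⟨μ₂, μ₃, by ring⟩
    obtain ⟨v, hv⟩ := Nat.find_spec hrep
    refine ⟨(Nat.find hrep, v), ⟨fun s hs h => hap s hs (h.trans hv), fun y hy h => ?_⟩, hv⟩
    exact Nat.find_min hrep hy ⟨y.2, h.trans hv⟩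

theorem IsInnerCorner.exists_eq_succ_mul (h₂ : 0 < a₂) {p q : ℕ}
    (hc : IsInnerCorner (staircase a₁ a₂ a₃) p q) :
    ∃ k, a₂ * (p + 1) + a₃ * (q + 1) = (k + 1) * a₁ := by
  obtain ⟨hl, hd, hpq⟩ := hc
  have hmin : ∀ y : ℕ × ℕ, y.1 < p + 1 → a₂ * y.1 + a₃ * y.2 ≠ a₂ * (p + 1) + a₃ * (q + 1) := by
    rintro ⟨u, v⟩ hu h
    simp only at hu h
    -- `(u, v - 1)` would be a representation of the weight of `(p + 1, q)` with `u < p + 1`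
    obtain ⟨w, rfl⟩ := Nat.exists_eq_add_one_of_ne_zero fun hv : v = 0 => by
      subst hv; nlinarith
    exact hd.2 (u, w) hu (by simp only; linarith)
  obtain ⟨s, ⟨α, β, γ, rfl⟩, hs⟩ :
      ∃ s ∈ semigroupOf a₁ a₂ a₃, a₁ + s = a₂ * (p + 1) + a₃ * (q + 1) := by
    by_contra! h
    exact hpq ⟨h, hmin⟩
  have hnot : (p + 1 - β, q + 1 - γ) ∉ staircase a₁ a₂ a₃ := tsub_notMem_staircase (α := α)
    (by linarith)
  obtain rfl : β = 0 := by
    by_contra hβ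
    exact hnot (isLowerSet_staircase (Prod.mk_le_mk.2 ⟨by omega, by omega⟩) hl)
  obtain rfl : γ = 0 := by
    by_contra hγ
    exact hnot (isLowerSet_staircase (Prod.mk_le_mk.2 ⟨by omega, by omega⟩) hd)
  exact ⟨α, by linarith⟩

theorem IsInnerCorner.weight_le (h₂ : 0 < a₂) {p q p' q' : ℕ}
    (hc : IsInnerCorner (staircase a₁ a₂ a₃) p q)
    (hc' : IsInnerCorner (staircase a₁ a₂ a₃) p' q') :
    a₂ * (p + 1) + a₃ * (q + 1) ≤ a₂ * (p' + 1) + a₃ * (q' + 1) := by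
  obtain ⟨k, hk⟩ := hc.exists_eq_succ_mul h₂
  obtain ⟨k', hk'⟩ := hc'.exists_eq_succ_mul h₂
  by_contra! hlt
  rw [hk, hk'] at hlt
  obtain ⟨j, rfl⟩ := Nat.exists_eq_add_of_lt (show k' < k by
    simpa using Nat.lt_of_mul_lt_mul_right hlt)
  have hnot : (p + 1 - (p' + 1), q + 1 - (q' + 1)) ∉ staircase a₁ a₂ a₃ :=
    tsub_notMem_staircase (α := j) (by rw [hk]; linarith)
  exact hnot (isLowerSet_staircase (Prod.mk_le_mk.2 ⟨by omega, by omega⟩) hc.1)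

theorem isInnerCorner_staircase_unique (h₂ : 0 < a₂) (h₃ : 0 < a₃) {p q p' q' : ℕ}
    (hc : IsInnerCorner (staircase a₁ a₂ a₃) p q)
    (hc' : IsInnerCorner (staircase a₁ a₂ a₃) p' q') : p = p' ∧ q = q' := by
  have hw := le_antisymm (hc.weight_le h₂ hc') (hc'.weight_le h₂ hc)
  have h := injOn_staircase h₃ hc.2.1 hc'.2.1 (by simp only; linarith)
  simp only [Prod.mk.injEq] at h
  omega

theorem staircase_eq_range_product_sdiff_Ico_product (h₂ : 0 < a₂) (h₃ : 0 < a₃) :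
    ∃ c e b d : ℕ, e ≤ c ∧ d ≤ b ∧
      staircase a₁ a₂ a₃ = ↑(range c ×ˢ range b \ Ico e c ×ˢ Ico d b) := by
  have hrow : (a₁ - 0, 0 - 0) ∉ staircase a₁ a₂ a₃ := tsub_notMem_staircase (α := a₂ - 1)
    (show a₂ * a₁ + a₃ * 0 = (a₂ - 1 + 1) * a₁ + a₂ * 0 + a₃ * 0 by
      rw [Nat.sub_add_cancel h₂]; ring)
  have hcol : (0 - 0, a₁ - 0) ∉ staircase a₁ a₂ a₃ := tsub_notMem_staircase (α := a₃ - 1)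
    (show a₂ * 0 + a₃ * a₁ = (a₃ - 1 + 1) * a₁ + a₂ * 0 + a₃ * 0 by
      rw [Nat.sub_add_cancel h₃]; ring)
  exact isLowerSet_staircase.eq_range_product_sdiff_Ico_product hrow hcol
    fun _ _ _ _ => isInnerCorner_staircase_unique h₂ h₃

end Staircase

open scoped Classical in
theorem mul_one_sub_X_pow_eq_sum_staircase {a₁ a₂ a₃ : ℕ} (h₃ : 0 < a₃) {f : ℤ⟦X⟧}
    (hf : ∀ m, coeff m f = if m ∈ semigroupOf a₁ a₂ a₃ then 1 else 0) {T : Finset (ℕ × ℕ)}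
    (hT : staircase a₁ a₂ a₃ = ↑T) :
    f * (1 - X ^ a₁) = ∑ x ∈ T, X ^ (a₂ * x.1 + a₃ * x.2) := by
  have hinj := injOn_staircase (a₁ := a₁) (a₂ := a₂) h₃
  rw [hT] at hinj
  rw [← sum_image hinj]
  ext m
  have hS : ∀ s ∈ semigroupOf a₁ a₂ a₃, a₁ + s ∈ semigroupOf a₁ a₂ a₃ :=
    fun _ ⟨α, β, γ, hs⟩ => ⟨α + 1, β, γ, by rw [hs]; ring⟩
  rw [coeff_mul_one_sub_X_pow hS hf, map_sum]
  simp only [coeff_X_pow, ← image_staircase (a₂ := a₂) (a₃ := a₃), hT]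
  simp

open scoped Classical in
theorem stmt_1_general (a₁ a₂ a₃ : ℕ) (h₂ : 0 < a₂) (h₃ : 0 < a₃)
    (f : PowerSeries ℤ)
    (hf : ∀ m : ℕ, PowerSeries.coeff m f =
      if ∃ μ₁ μ₂ μ₃ : ℕ, m = μ₁ * a₁ + μ₂ * a₂ + μ₃ * a₃ then 1 else 0) :
    ∃ p₁ p₂ p₃ p₄ p₅ : ℕ,
      (1 - PowerSeries.X ^ a₁) * (1 - PowerSeries.X ^ a₂) * (1 - PowerSeries.X ^ a₃) * f
        = 1 - PowerSeries.X ^ p₁ - PowerSeries.X ^ p₂ - PowerSeries.X ^ p₃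
            + PowerSeries.X ^ p₄ + PowerSeries.X ^ p₅ := by
  obtain ⟨c, e, b, d, hec, hdb, hT⟩ :=
    staircase_eq_range_product_sdiff_Ico_product (a₁ := a₁) h₂ h₃
  refine ⟨a₂ * c, a₃ * b, a₂ * e + a₃ * d, a₂ * c + a₃ * d, a₂ * e + a₃ * b, ?_⟩
  calc (1 - X ^ a₁) * (1 - X ^ a₂) * (1 - X ^ a₃) * f
      = (1 - X ^ a₂) * (1 - X ^ a₃) * (f * (1 - X ^ a₁)) := by ring
    _ = (1 - X ^ a₂) * (1 - X ^ a₃) *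
          ∑ x ∈ range c ×ˢ range b \ Ico e c ×ˢ Ico d b, (X ^ a₂) ^ x.1 * (X ^ a₃) ^ x.2 := by
        rw [mul_one_sub_X_pow_eq_sum_staircase h₃ hf hT]
        simp only [pow_add, pow_mul]
    _ = _ := by
        rw [one_sub_mul_one_sub_mul_sum_range_product_sdiff _ _ hec hdb]
        simp only [← pow_mul, ← pow_add]

open scoped Classical in
theorem stmt_1 (a₁ a₂ a₃ : ℕ) (h₁ : 0 < a₁) (h₂ : 0 < a₂) (h₃ : 0 < a₃)
    (hgcd : Nat.gcd a₁ (Nat.gcd a₂ a₃) = 1)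
    (f : PowerSeries ℤ)
    (hf : ∀ m : ℕ, PowerSeries.coeff m f =
      if ∃ μ₁ μ₂ μ₃ : ℕ, m = μ₁ * a₁ + μ₂ * a₂ + μ₃ * a₃ then 1 else 0) :
    ∃ p₁ p₂ p₃ p₄ p₅ : ℕ,
      (1 - PowerSeries.X ^ a₁) * (1 - PowerSeries.X ^ a₂) * (1 - PowerSeries.X ^ a₃) * f
        = 1 - PowerSeries.X ^ p₁ - PowerSeries.X ^ p₂ - PowerSeries.X ^ p₃
            + PowerSeries.X ^ p₄ + PowerSeries.X ^ p₅ :=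
  stmt_1_general a₁ a₂ a₃ h₂ h₃ f hf
end

section
/- Let p, a₁, …, a_k ∈ ℤ^d, and let c, v ∈ ℂ^d be such that ⟨v, a_i⟩ ≠ 0 for all i = 1, …, k, where ⟨w, a⟩ = ∑_{j=1}^d w_j a_j for w ∈ ℂ^d and a ∈ ℤ^d. Let l be the number of indices i ∈ {1, …, k} with exp⟨c, a_i⟩ = 1. Then there exist ε > 0 and a function h analytic on the disc {τ ∈ ℂ : |τ| < ε} such that for every τ with 0 < |τ| < ε one has exp⟨c + τv, a_i⟩ ≠ 1 for all i, and h(τ) = τ^l · exp⟨c + τv, p⟩ / ∏_{i=1}^k (1 − exp⟨c + τv, a_i⟩). In other words, the function τ ↦ exp⟨c + τv, p⟩ / ∏_{i=1}^k (1 − exp⟨c + τv, a_i⟩) has a pole of order at most l at τ = 0. -/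
/-!
Write `1 - exp⟨c + τv, aᵢ⟩ = 1 - exp(⟨c, aᵢ⟩ + τ⟨v, aᵢ⟩)`. This factor vanishes at `τ = 0` exactly
when `exp⟨c, aᵢ⟩ = 1`, and then only to first order, since its derivative there is
`-⟨v, aᵢ⟩ ≠ 0`. So the denominator has a zero of order `l` at `0`: it equals `τ^l g(τ)` near `0` with
`g` analytic and `g(0) ≠ 0`, and `h = exp⟨c + τv, p⟩ / g` is the required function.
-/

/-- The pairing `⟨w, a⟩ = ∑ j, w j * a j` between a complex vector and an integer vector. -/
noncomputable def cPair {d : ℕ} (w : Fin d → ℂ) (a : Fin d → ℤ) : ℂ :=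
  ∑ j, w j * (a j : ℂ)

open Complex Topology Metric

section AnalyticOrder

variable {𝕜 : Type*} [NontriviallyNormedField 𝕜] {z₀ : 𝕜}

theorem analyticOrderAt_finset_prod {ι : Type*} {s : Finset ι} {f : ι → 𝕜 → 𝕜}
    (hf : ∀ i ∈ s, AnalyticAt 𝕜 (f i) z₀) :
    analyticOrderAt (fun z => ∏ i ∈ s, f i z) z₀ = ∑ i ∈ s, analyticOrderAt (f i) z₀ := by
  classical
  induction s using Finset.induction_on with
  | empty => simp [analyticOrderAt_eq_zero]
  | insert j s hj ih =>
    have hs : ∀ i ∈ s, AnalyticAt 𝕜 (f i) z₀ := fun i hi => hf i (Finset.mem_insert_of_mem hi)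
    have hprod : (fun z => ∏ i ∈ insert j s, f i z) = f j * fun z => ∏ i ∈ s, f i z := by
      ext z; simp [Finset.prod_insert hj]
    rw [hprod, analyticOrderAt_mul (hf j (Finset.mem_insert_self j s))
      (Finset.analyticAt_fun_prod s hs), ih hs, Finset.sum_insert hj]

theorem exists_analyticOnNhd_eq_sub_pow_mul_div [CompleteSpace 𝕜] {F P : 𝕜 → 𝕜} {n : ℕ}
    (hF : AnalyticAt 𝕜 F z₀) (hP : AnalyticAt 𝕜 P z₀) (hn : analyticOrderAt P z₀ = n) :
    ∃ ε > (0 : ℝ), ∃ h : 𝕜 → 𝕜, AnalyticOnNhd 𝕜 h (ball z₀ ε) ∧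
      ∀ z ∈ ball z₀ ε, z ≠ z₀ → P z ≠ 0 ∧ h z = (z - z₀) ^ n * F z / P z := by
  obtain ⟨g, hg, hg₀, hPg⟩ := hP.analyticOrderAt_eq_natCast.mp hn
  have hnear : ∀ᶠ z in 𝓝 z₀, AnalyticAt 𝕜 F z ∧ AnalyticAt 𝕜 g z ∧ g z ≠ 0 ∧
      P z = (z - z₀) ^ n * g z :=
    hF.eventually_analyticAt.and <| hg.eventually_analyticAt.and <|
      (hg.continuousAt.eventually_ne hg₀).and hPg
  obtain ⟨ε, hε, hball⟩ := eventually_nhds_iff_ball.mp hnear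
  refine ⟨ε, hε, F / g, fun z hz => (hball z hz).1.div (hball z hz).2.1 (hball z hz).2.2.1,
    fun z hz hzz₀ => ?_⟩
  obtain ⟨-, -, hgz, hPz⟩ := hball z hz
  have hpow : (z - z₀) ^ n ≠ 0 := pow_ne_zero n (sub_ne_zero.mpr hzz₀)
  refine ⟨hPz ▸ mul_ne_zero hpow hgz, ?_⟩
  rw [hPz, Pi.div_apply, mul_div_mul_left _ _ hpow]

end AnalyticOrder

theorem analyticOrderAt_one_sub_cexp (α β : ℂ) (hβ : β ≠ 0) :
    analyticOrderAt (fun τ => 1 - exp (α + τ * β)) 0 = if exp α = 1 then 1 else 0 := by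
  have han : AnalyticAt ℂ (fun τ : ℂ => 1 - exp (α + τ * β)) 0 := by fun_prop
  split_ifs with hα
  · have hderiv : HasDerivAt (fun τ : ℂ => 1 - exp (α + τ * β)) (-(exp α * β)) 0 := by
      simpa using (((hasDerivAt_id (0 : ℂ)).mul_const β).const_add α).cexp.const_sub 1
    exact han.analyticOrderAt_eq_one_of_zero_deriv_ne_zero (by simp [hα])
      (by simp [hderiv.deriv, hα, hβ])
  · exact han.analyticOrderAt_eq_zero.mpr (by simpa [sub_eq_zero] using Ne.symm hα)

lemma cPair_add_smul {d : ℕ} (c v : Fin d → ℂ) (τ : ℂ) (b : Fin d → ℤ) :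
    cPair (c + τ • v) b = cPair c b + τ * cPair v b := by
  simp only [cPair, Pi.add_apply, Pi.smul_apply, smul_eq_mul, add_mul, Finset.sum_add_distrib,
    Finset.mul_sum]
  ring_nf

theorem stmt_8 (d k : ℕ) (p : Fin d → ℤ) (a : Fin k → Fin d → ℤ)
    (c v : Fin d → ℂ) (hv : ∀ i, cPair v (a i) ≠ 0)
    (l : ℕ) (hl : l = Set.ncard {i : Fin k | Complex.exp (cPair c (a i)) = 1}) :
    ∃ ε > (0 : ℝ), ∃ h : ℂ → ℂ,
      AnalyticOnNhd ℂ h (Metric.ball (0 : ℂ) ε) ∧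
      ∀ τ : ℂ, 0 < ‖τ‖ → ‖τ‖ < ε →
        (∀ i, Complex.exp (cPair (c + τ • v) (a i)) ≠ 1) ∧
        h τ = τ ^ l * Complex.exp (cPair (c + τ • v) p) /
            ∏ i, (1 - Complex.exp (cPair (c + τ • v) (a i))) := by
  classical
  simp_rw [cPair_add_smul]
  have horder : analyticOrderAt
      (fun τ => ∏ i, (1 - exp (cPair c (a i) + τ * cPair v (a i)))) 0 = l := by
    rw [analyticOrderAt_finset_prod (fun i _ => by fun_prop)]
    simp_rw [analyticOrderAt_one_sub_cexp _ _ (hv _)]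
    rw [Finset.sum_boole, hl, ← Set.ncard_coe_finset, Finset.coe_filter]
    simp
  obtain ⟨ε, hε, h, hh, hpole⟩ := exists_analyticOnNhd_eq_sub_pow_mul_div
    (F := fun τ => exp (cPair c p + τ * cPair v p)) (by fun_prop) (by fun_prop) horder
  refine ⟨ε, hε, h, hh, fun τ hτ₀ hτε => ?_⟩
  obtain ⟨hprod, hhτ⟩ := hpole τ (mem_ball_zero_iff.mpr hτε) (norm_pos_iff.mp hτ₀)
  refine ⟨fun i => ?_, by simpa using hhτ⟩
  exact (sub_ne_zero.mp (Finset.prod_ne_zero_iff.mp hprod i (Finset.mem_univ i))).symm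
end

section
/- Let B ⊆ ℝ^d be a nonempty compact convex set, let c ∈ ℝ^d be a nonzero vector, and set γ_min = min_{x ∈ B} ⟨c, x⟩ and γ_max = max_{x ∈ B} ⟨c, x⟩. Let γ₁, γ₂ be real numbers with γ_min < γ₁ < γ₂ < γ_max. Then there exist a point x₀ ∈ B and a number α with 0 < α < 1 such that the set A = {α·x + (1−α)·x₀ : x ∈ B} satisfies A ⊆ B, min_{x ∈ A} ⟨c, x⟩ = γ₁, and max_{x ∈ A} ⟨c, x⟩ = γ₂. -/
/-!
Under the map `x ↦ α • x + (1 - α) • x₀` the values of a linear functional `f` transform by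
`s ↦ α * s + (1 - α) * f x₀`, which is increasing for `α > 0`; so the extreme values of `f` on the
image of `B` are `α * γmin + (1 - α) * f x₀` and `α * γmax + (1 - α) * f x₀`. Matching them with
`γ₁, γ₂` forces `α = (γ₂ - γ₁) / (γmax - γmin)` and a value of `f x₀` in `[γmin, γmax]`, which is
attained on `B` because `f '' B` is convex, i.e. an interval.
-/

theorem LinearMap.image_image_smul_add_smul {R E : Type*} [CommSemiring R] [AddCommMonoid E]
    [Module R E] (f : E →ₗ[R] R) (S : Set E) (α β : R) (x₀ : E) :
    f '' ((fun x => α • x + β • x₀) '' S) = (fun t => α * t + β * f x₀) '' (f '' S) := by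
  simp only [Set.image_image, map_add, map_smul, smul_eq_mul]

section

variable {𝕜 E : Type*} [Field 𝕜] [LinearOrder 𝕜] [IsStrictOrderedRing 𝕜]
  [AddCommGroup E] [Module 𝕜 E]

theorem Convex.image_smul_add_one_sub_smul_subset {B : Set E} (hB : Convex 𝕜 B) {x₀ : E}
    (hx₀ : x₀ ∈ B) {α : 𝕜} (hα₀ : 0 ≤ α) (hα₁ : α ≤ 1) :
    (fun x => α • x + (1 - α) • x₀) '' B ⊆ B := by
  rintro _ ⟨x, hx, rfl⟩
  exact hB hx hx₀ hα₀ (sub_nonneg.2 hα₁) (add_sub_cancel α 1)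

theorem Convex.exists_mem_apply_eq {B : Set E} (hB : Convex 𝕜 B) (f : E →ₗ[𝕜] 𝕜)
    {a b t : 𝕜} (ha : a ∈ f '' B) (hb : b ∈ f '' B) (ht : t ∈ Set.Icc a b) :
    ∃ x ∈ B, f x = t :=
  (hB.linear_image f).ordConnected.out ha hb ht

theorem Convex.exists_image_smul_add_one_sub_smul_isLeast_isGreatest {B : Set E}
    (hB : Convex 𝕜 B) (f : E →ₗ[𝕜] 𝕜) {γmin γmax γ₁ γ₂ : 𝕜}
    (hmin : IsLeast (f '' B) γmin) (hmax : IsGreatest (f '' B) γmax)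
    (h₁ : γmin < γ₁) (h₁₂ : γ₁ < γ₂) (h₂ : γ₂ < γmax) :
    ∃ x₀ ∈ B, ∃ α : 𝕜, 0 < α ∧ α < 1 ∧
      (fun x => α • x + (1 - α) • x₀) '' B ⊆ B ∧
      IsLeast (f '' ((fun x => α • x + (1 - α) • x₀) '' B)) γ₁ ∧
      IsGreatest (f '' ((fun x => α • x + (1 - α) • x₀) '' B)) γ₂ := by
  have hwidth : 0 < γmax - γmin := by linarith
  set α := (γ₂ - γ₁) / (γmax - γmin)
  have hαwidth : α * (γmax - γmin) = γ₂ - γ₁ := div_mul_cancel₀ _ hwidth.ne'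
  have hα₀ : 0 < α := div_pos (by linarith) hwidth
  have hα₁ : α < 1 := (div_lt_one hwidth).2 (by linarith)
  set t := (γ₁ - α * γmin) / (1 - α)
  have htα : (1 - α) * t = γ₁ - α * γmin := mul_div_cancel₀ _ (by linarith)
  have ht_mem : t ∈ Set.Icc γmin γmax := by
    constructor <;> nlinarith
  obtain ⟨x₀, hx₀, hfx₀⟩ := hB.exists_mem_apply_eq f hmin.1 hmax.1 ht_mem
  have hmono : Monotone fun s => α * s + (1 - α) * f x₀ := fun _ _ h =>
    add_le_add_left (mul_le_mul_of_nonneg_left h hα₀.le) _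
  refine ⟨x₀, hx₀, α, hα₀, hα₁, hB.image_smul_add_one_sub_smul_subset hx₀ hα₀.le hα₁.le,
    ?_, ?_⟩
  · rw [f.image_image_smul_add_smul]
    convert hmono.map_isLeast hmin using 1
    rw [hfx₀]; linarith
  · rw [f.image_image_smul_add_smul]
    convert hmono.map_isGreatest hmax using 1
    rw [hfx₀]; linarith

end

theorem stmt_9_general (d : ℕ) (B : Set (Fin d → ℝ)) (hBconv : Convex ℝ B)
    (c : Fin d → ℝ)
    (γmin γmax : ℝ)
    (hmin : IsLeast ((fun x : Fin d → ℝ => ∑ j, c j * x j) '' B) γmin)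
    (hmax : IsGreatest ((fun x : Fin d → ℝ => ∑ j, c j * x j) '' B) γmax)
    (γ₁ γ₂ : ℝ) (h₁ : γmin < γ₁) (h₁₂ : γ₁ < γ₂) (h₂ : γ₂ < γmax) :
    ∃ x₀ ∈ B, ∃ α : ℝ, 0 < α ∧ α < 1 ∧
      (fun x : Fin d → ℝ => α • x + (1 - α) • x₀) '' B ⊆ B ∧
      IsLeast ((fun x : Fin d → ℝ => ∑ j, c j * x j) ''
        ((fun x : Fin d → ℝ => α • x + (1 - α) • x₀) '' B)) γ₁ ∧
      IsGreatest ((fun x : Fin d → ℝ => ∑ j, c j * x j) ''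
        ((fun x : Fin d → ℝ => α • x + (1 - α) • x₀) '' B)) γ₂ :=
  hBconv.exists_image_smul_add_one_sub_smul_isLeast_isGreatest (dotProductBilin ℝ ℝ c)
    hmin hmax h₁ h₁₂ h₂

theorem stmt_9 (d : ℕ) (B : Set (Fin d → ℝ)) (hBne : B.Nonempty)
    (hBcomp : IsCompact B) (hBconv : Convex ℝ B)
    (c : Fin d → ℝ) (hc : c ≠ 0)
    (γmin γmax : ℝ)
    (hmin : IsLeast ((fun x : Fin d → ℝ => ∑ j, c j * x j) '' B) γmin)
    (hmax : IsGreatest ((fun x : Fin d → ℝ => ∑ j, c j * x j) '' B) γmax)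
    (γ₁ γ₂ : ℝ) (h₁ : γmin < γ₁) (h₁₂ : γ₁ < γ₂) (h₂ : γ₂ < γmax) :
    ∃ x₀ ∈ B, ∃ α : ℝ, 0 < α ∧ α < 1 ∧
      (fun x : Fin d → ℝ => α • x + (1 - α) • x₀) '' B ⊆ B ∧
      IsLeast ((fun x : Fin d → ℝ => ∑ j, c j * x j) ''
        ((fun x : Fin d → ℝ => α • x + (1 - α) • x₀) '' B)) γ₁ ∧
      IsGreatest ((fun x : Fin d → ℝ => ∑ j, c j * x j) ''
        ((fun x : Fin d → ℝ => α • x + (1 - α) • x₀) '' B)) γ₂ :=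
  stmt_9_general d B hBconv c γmin γmax hmin hmax γ₁ γ₂ h₁ h₁₂ h₂
end

section
/- For a nonempty compact convex set B ⊆ ℝ^d and c ∈ ℝ^d, define width(B, c) = max_{x ∈ B} ⟨c, x⟩ − min_{x ∈ B} ⟨c, x⟩. Let ω ≥ 0 be a real number with the flatness property: every nonempty compact convex set A ⊆ ℝ^d with A ∩ ℤ^d = ∅ satisfies width(A, c') ≤ ω for some nonzero c' ∈ ℤ^d. Let B ⊆ ℝ^d be a nonempty compact convex set and let c ∈ ℤ^d be a nonzero vector such that width(B, c) ≤ 2·width(B, c') for every nonzero c' ∈ ℤ^d. Then for any two points x₁, x₂ ∈ B ∩ ℤ^d with ⟨c, x₂⟩ − ⟨c, x₁⟩ > 2ω, there exists a point x ∈ B ∩ ℤ^d with ⟨c, x₁⟩ < ⟨c, x⟩ < ⟨c, x₂⟩. -/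
/-- The width of a set `B ⊆ ℝ^d` in the direction `c`:
`width(B, c) = max_{x ∈ B} ⟨c, x⟩ − min_{x ∈ B} ⟨c, x⟩`
(for a nonempty compact set these are attained, and `sSup`/`sInf` give them). -/
noncomputable def dirWidth {d : ℕ} (B : Set (Fin d → ℝ)) (c : Fin d → ℝ) : ℝ :=
  sSup ((fun x : Fin d → ℝ => ∑ j, c j * x j) '' B) -
    sInf ((fun x : Fin d → ℝ => ∑ j, c j * x j) '' B)

private lemma lin_comb {d : ℕ} (w : Fin d → ℝ) (s t : ℝ) (x y : Fin d → ℝ) :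
    ∑ j, w j * (s • x + t • y) j = s * ∑ j, w j * x j + t * ∑ j, w j * y j := by
  rw [Finset.mul_sum, Finset.mul_sum, ← Finset.sum_add_distrib]
  exact Finset.sum_congr rfl fun j _ => by
    simp only [Pi.add_apply, Pi.smul_apply, smul_eq_mul]; ring

private lemma cont_sum {d : ℕ} (w : Fin d → ℝ) :
    Continuous fun x : Fin d → ℝ => ∑ j, w j * x j :=
  continuous_finset_sum _ fun j _ => (continuous_const.mul (continuous_apply j))

private lemma width_points {d : ℕ} (B : Set (Fin d → ℝ)) (hBne : B.Nonempty)
    (hBcomp : IsCompact B) (w : Fin d → ℝ) :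
    ∃ P ∈ B, ∃ Q ∈ B, (∀ y ∈ B, (∑ j, w j * y j) ≤ ∑ j, w j * P j) ∧
      (∀ y ∈ B, (∑ j, w j * Q j) ≤ ∑ j, w j * y j) ∧
      dirWidth B w = (∑ j, w j * P j) - (∑ j, w j * Q j) := by
  obtain ⟨P, hP, hPmax⟩ := hBcomp.exists_isMaxOn hBne (cont_sum w).continuousOn
  obtain ⟨Q, hQ, hQmin⟩ := hBcomp.exists_isMinOn hBne (cont_sum w).continuousOn
  have hmax : ∀ y ∈ B, (∑ j, w j * y j) ≤ ∑ j, w j * P j := fun y hy => hPmax hy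
  have hmin : ∀ y ∈ B, (∑ j, w j * Q j) ≤ ∑ j, w j * y j := fun y hy => hQmin hy
  refine ⟨P, hP, Q, hQ, hmax, hmin, ?_⟩
  have hg : IsGreatest ((fun x : Fin d → ℝ => ∑ j, w j * x j) '' B) (∑ j, w j * P j) :=
    ⟨⟨P, hP, rfl⟩, by rintro r ⟨y, hy, rfl⟩; exact hmax y hy⟩
  have hl : IsLeast ((fun x : Fin d → ℝ => ∑ j, w j * x j) '' B) (∑ j, w j * Q j) :=
    ⟨⟨Q, hQ, rfl⟩, by rintro r ⟨y, hy, rfl⟩; exact hmin y hy⟩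
  unfold dirWidth
  rw [hg.csSup_eq, hl.csInf_eq]

private lemma chord {d : ℕ} {B : Set (Fin d → ℝ)} (hBconv : Convex ℝ B)
    (cR gR : Fin d → ℝ) {α β : ℝ} (hαβ : α < β)
    {u y : Fin d → ℝ} (hu : u ∈ B) (hy : y ∈ B)
    (hua : (∑ j, cR j * u j) < α) (hyβ : β < (∑ j, cR j * y j)) :
    ∃ z, (z ∈ B ∧ (∑ j, cR j * z j) = β) ∧ ∃ z', (z' ∈ B ∧ (∑ j, cR j * z' j) = α) ∧
      ((∑ j, gR j * y j) - (∑ j, gR j * z j)) * (β - α)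
        = ((∑ j, gR j * z j) - (∑ j, gR j * z' j)) * ((∑ j, cR j * y j) - β) ∧
      ((∑ j, gR j * y j) - (∑ j, gR j * u j)) * (β - (∑ j, cR j * u j))
        = ((∑ j, gR j * z j) - (∑ j, gR j * u j)) * ((∑ j, cR j * y j) - (∑ j, cR j * u j)) := by
  have hD : (0:ℝ) < (∑ j, cR j * y j) - (∑ j, cR j * u j) := by linarith
  obtain ⟨t, ht⟩ : ∃ t : ℝ, t = (β - (∑ j, cR j * u j)) / ((∑ j, cR j * y j) - (∑ j, cR j * u j)) := ⟨_, rfl⟩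
  obtain ⟨t', ht'⟩ : ∃ t' : ℝ, t' = (α - (∑ j, cR j * u j)) / ((∑ j, cR j * y j) - (∑ j, cR j * u j)) := ⟨_, rfl⟩
  have ht0 : 0 ≤ t := by rw [ht]; exact div_nonneg (by linarith) hD.le
  have ht1 : t ≤ 1 := by rw [ht, div_le_one hD]; linarith
  have ht'0 : 0 ≤ t' := by rw [ht']; exact div_nonneg (by linarith) hD.le
  have ht'1 : t' ≤ 1 := by rw [ht', div_le_one hD]; linarith
  have hz : (1-t) • u + t • y ∈ B := hBconv hu hy (by linarith) ht0 (by ring)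
  have hz' : (1-t') • u + t' • y ∈ B := hBconv hu hy (by linarith) ht'0 (by ring)
  have hFz : (∑ j, cR j * ((1-t) • u + t • y) j)
      = (1-t) * (∑ j, cR j * u j) + t * (∑ j, cR j * y j) := lin_comb _ _ _ _ _
  have hFz' : (∑ j, cR j * ((1-t') • u + t' • y) j)
      = (1-t') * (∑ j, cR j * u j) + t' * (∑ j, cR j * y j) := lin_comb _ _ _ _ _
  have hGz : (∑ j, gR j * ((1-t) • u + t • y) j)
      = (1-t) * (∑ j, gR j * u j) + t * (∑ j, gR j * y j) := lin_comb _ _ _ _ _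
  have hGz' : (∑ j, gR j * ((1-t') • u + t' • y) j)
      = (1-t') * (∑ j, gR j * u j) + t' * (∑ j, gR j * y j) := lin_comb _ _ _ _ _
  refine ⟨_, ⟨hz, ?_⟩, _, ⟨hz', ?_⟩, ?_, ?_⟩
  · rw [hFz, ht]; field_simp; ring
  · rw [hFz', ht']; field_simp; ring
  · rw [hGz, hGz', ht, ht']; field_simp; ring
  · rw [hGz, ht]; field_simp; ring


private lemma sum_neg {d : ℕ} (c : Fin d → ℤ) (v : Fin d → ℝ) :
    (∑ j, (-(c j : ℝ)) * v j) = -(∑ j, (c j : ℝ) * v j) := by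
  rw [← Finset.sum_neg_distrib]
  exact Finset.sum_congr rfl fun j _ => by ring


set_option maxHeartbeats 1000000 in
theorem stmt_10 (d : ℕ) (ω : ℝ) (hω : 0 ≤ ω)
    (hflat : ∀ A : Set (Fin d → ℝ), A.Nonempty → IsCompact A → Convex ℝ A →
      (∀ m : Fin d → ℤ, (fun i => (m i : ℝ)) ∉ A) →
      ∃ c' : Fin d → ℤ, c' ≠ 0 ∧ dirWidth A (fun i => (c' i : ℝ)) ≤ ω)
    (B : Set (Fin d → ℝ)) (hBne : B.Nonempty) (hBcomp : IsCompact B)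
    (hBconv : Convex ℝ B)
    (c : Fin d → ℤ) (hc : c ≠ 0)
    (hcwidth : ∀ c' : Fin d → ℤ, c' ≠ 0 →
      dirWidth B (fun i => (c i : ℝ)) ≤ 2 * dirWidth B (fun i => (c' i : ℝ)))
    (x₁ x₂ : Fin d → ℤ)
    (hx₁ : (fun i => (x₁ i : ℝ)) ∈ B) (hx₂ : (fun i => (x₂ i : ℝ)) ∈ B)
    (hgap : ((∑ j, c j * x₂ j : ℤ) : ℝ) - ((∑ j, c j * x₁ j : ℤ) : ℝ) > 2 * ω) :
    ∃ x : Fin d → ℤ, (fun i => (x i : ℝ)) ∈ B ∧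
      (∑ j, c j * x₁ j) < (∑ j, c j * x j) ∧ (∑ j, c j * x j) < (∑ j, c j * x₂ j) := by
  by_contra hcon
  push_neg at hcon
  have hFA : ((∑ j, c j * x₁ j : ℤ) : ℝ) = (∑ j, (c j : ℝ) * (x₁ j : ℝ)) := by push_cast; ring
  have hFB : ((∑ j, c j * x₂ j : ℤ) : ℝ) = (∑ j, (c j : ℝ) * (x₂ j : ℝ)) := by push_cast; ring
  rw [hFA, hFB] at hgap
  obtain ⟨ε, hεdef⟩ : ∃ ε : ℝ, ε = ((∑ j, (c j : ℝ) * (x₂ j : ℝ)) - (∑ j, (c j : ℝ) * (x₁ j : ℝ)) - 2*ω)/4 := ⟨_, rfl⟩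
  obtain ⟨al, hal⟩ : ∃ al : ℝ, al = (∑ j, (c j : ℝ) * (x₁ j : ℝ)) + ε := ⟨_, rfl⟩
  obtain ⟨be, hbe⟩ : ∃ be : ℝ, be = (∑ j, (c j : ℝ) * (x₂ j : ℝ)) - ε := ⟨_, rfl⟩
  have hε0 : 0 < ε := by rw [hεdef]; linarith
  have hLgt : 2*ω < be - al := by rw [hal, hbe, hεdef]; linarith
  have hL0 : 0 < be - al := by linarith
  have haα : (∑ j, (c j : ℝ) * (x₁ j : ℝ)) < al := by rw [hal]; linarith
  have hβb : be < (∑ j, (c j : ℝ) * (x₂ j : ℝ)) := by rw [hbe]; linarith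
  set A : Set (Fin d → ℝ) := B ∩ {x | al ≤ (∑ j, (c j : ℝ) * x j) ∧ (∑ j, (c j : ℝ) * x j) ≤ be} with hAdef
  have hmemA : ∀ z, z ∈ B → al ≤ (∑ j, (c j : ℝ) * z j) → (∑ j, (c j : ℝ) * z j) ≤ be → z ∈ A := by
    intro z h1 h2 h3; rw [hAdef]; exact ⟨h1, h2, h3⟩
  have hmemA' : ∀ z, z ∈ A → z ∈ B ∧ al ≤ (∑ j, (c j : ℝ) * z j) ∧ (∑ j, (c j : ℝ) * z j) ≤ be := by
    intro z hz; rw [hAdef] at hz; exact ⟨hz.1, hz.2.1, hz.2.2⟩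
  have hAne : A.Nonempty := by
    refine ⟨(1 - (1/2:ℝ)) • (fun i => (x₁ i : ℝ)) + (1/2:ℝ) • (fun i => (x₂ i : ℝ)),
      hmemA _ (hBconv hx₁ hx₂ (by norm_num) (by norm_num) (by norm_num)) ?_ ?_⟩ <;>
    · rw [show (∑ j, (c j : ℝ) * ((1 - (1/2:ℝ)) • (fun i => (x₁ i : ℝ)) + (1/2:ℝ) • (fun i => (x₂ i : ℝ))) j)
          = (1 - (1/2:ℝ)) * (∑ j, (c j : ℝ) * (x₁ j : ℝ)) + (1/2:ℝ) * (∑ j, (c j : ℝ) * (x₂ j : ℝ)) from lin_comb _ _ _ _ _]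
      linarith
  have hAcomp : IsCompact A := by
    rw [hAdef]
    refine hBcomp.inter_right ?_
    rw [Set.setOf_and]
    exact (isClosed_le continuous_const (cont_sum _)).inter (isClosed_le (cont_sum _) continuous_const)
  have hAconv : Convex ℝ A := by
    rw [hAdef]
    intro x hx y hy s t hs ht hst
    have hlin : (∑ j, (c j : ℝ) * (s • x + t • y) j)
        = s * (∑ j, (c j : ℝ) * x j) + t * (∑ j, (c j : ℝ) * y j) := lin_comb _ _ _ _ _
    have keyal : s * al + t * al = al := by linear_combination al * hst
    have keybe : s * be + t * be = be := by linear_combination be * hst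
    refine ⟨hBconv hx.1 hy.1 hs ht hst, ?_, ?_⟩ <;> rw [hlin]
    · linarith [mul_le_mul_of_nonneg_left hx.2.1 hs, mul_le_mul_of_nonneg_left hy.2.1 ht]
    · linarith [mul_le_mul_of_nonneg_left hx.2.2 hs, mul_le_mul_of_nonneg_left hy.2.2 ht]
  have hAfree : ∀ m : Fin d → ℤ, (fun i => (m i : ℝ)) ∉ A := by
    intro m hm
    obtain ⟨hmB, h1, h2⟩ := hmemA' _ hm
    have h1' : al ≤ ((∑ j, c j * m j : ℤ) : ℝ) := by push_cast; exact h1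
    have h2' : ((∑ j, c j * m j : ℤ) : ℝ) ≤ be := by push_cast; exact h2
    have hi1 : (∑ j, c j * x₁ j) < (∑ j, c j * m j) := by
      have : ((∑ j, c j * x₁ j : ℤ) : ℝ) < ((∑ j, c j * m j : ℤ) : ℝ) := by
        rw [hFA]; linarith
      exact_mod_cast this
    have hi2 : (∑ j, c j * m j) < (∑ j, c j * x₂ j) := by
      have : ((∑ j, c j * m j : ℤ) : ℝ) < ((∑ j, c j * x₂ j : ℤ) : ℝ) := by
        rw [hFB]; linarith
      exact_mod_cast this
    exact absurd (hcon m hmB hi1) (not_le.mpr hi2)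
  obtain ⟨c', hc'0, hc'w⟩ := hflat A hAne hAcomp hAconv hAfree
  obtain ⟨PA, hPAA, QA, hQAA, hPAmax0, hQAmin0, hAeq⟩ := width_points A hAne hAcomp (fun i => (c' i : ℝ))
  obtain ⟨P, hPB, Q, hQB, hPmax0, hQmin0, hBeq⟩ := width_points B hBne hBcomp (fun i => (c' i : ℝ))
  obtain ⟨PF, hPFB, QF, hQFB, hPFmax0, hQFmin0, hFeq⟩ := width_points B hBne hBcomp (fun i => (c i : ℝ))
  have hPAmax : ∀ y ∈ A, (∑ j, (c' j : ℝ) * y j) ≤ (∑ j, (c' j : ℝ) * PA j) := hPAmax0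
  have hQAmin : ∀ y ∈ A, (∑ j, (c' j : ℝ) * QA j) ≤ (∑ j, (c' j : ℝ) * y j) := hQAmin0
  have hPmax : ∀ y ∈ B, (∑ j, (c' j : ℝ) * y j) ≤ (∑ j, (c' j : ℝ) * P j) := hPmax0
  have hQmin : ∀ y ∈ B, (∑ j, (c' j : ℝ) * Q j) ≤ (∑ j, (c' j : ℝ) * y j) := hQmin0
  have hPFmax : ∀ y ∈ B, (∑ j, (c j : ℝ) * y j) ≤ (∑ j, (c j : ℝ) * PF j) := hPFmax0
  have hQFmin : ∀ y ∈ B, (∑ j, (c j : ℝ) * QF j) ≤ (∑ j, (c j : ℝ) * y j) := hQFmin0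
  have hc'wA : (∑ j, (c' j : ℝ) * PA j) - (∑ j, (c' j : ℝ) * QA j) ≤ ω := by rw [hAeq] at hc'w; exact hc'w
  have hcw : (∑ j, (c j : ℝ) * PF j) - (∑ j, (c j : ℝ) * QF j) ≤ 2 * ((∑ j, (c' j : ℝ) * P j) - (∑ j, (c' j : ℝ) * Q j)) := by
    have h := hcwidth c' hc'0; rw [hFeq, hBeq] at h; exact h
  have hg1P : (∑ j, (c' j : ℝ) * (x₁ j : ℝ)) ≤ (∑ j, (c' j : ℝ) * P j) := hPmax _ hx₁
  have hg1Q : (∑ j, (c' j : ℝ) * Q j) ≤ (∑ j, (c' j : ℝ) * (x₁ j : ℝ)) := hQmin _ hx₁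
  have hg2P : (∑ j, (c' j : ℝ) * (x₂ j : ℝ)) ≤ (∑ j, (c' j : ℝ) * P j) := hPmax _ hx₂
  have hg2Q : (∑ j, (c' j : ℝ) * Q j) ≤ (∑ j, (c' j : ℝ) * (x₂ j : ℝ)) := hQmin _ hx₂
  have hMa : (∑ j, (c j : ℝ) * (x₁ j : ℝ)) ≤ (∑ j, (c j : ℝ) * PF j) := hPFmax _ hx₁
  have hma : (∑ j, (c j : ℝ) * QF j) ≤ (∑ j, (c j : ℝ) * (x₁ j : ℝ)) := hQFmin _ hx₁
  have hbM : (∑ j, (c j : ℝ) * (x₂ j : ℝ)) ≤ (∑ j, (c j : ℝ) * PF j) := hPFmax _ hx₂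
  have hmb : (∑ j, (c j : ℝ) * QF j) ≤ (∑ j, (c j : ℝ) * (x₂ j : ℝ)) := hQFmin _ hx₂
  have hfPM : (∑ j, (c j : ℝ) * P j) ≤ (∑ j, (c j : ℝ) * PF j) := hPFmax _ hPB
  have hfPm : (∑ j, (c j : ℝ) * QF j) ≤ (∑ j, (c j : ℝ) * P j) := hQFmin _ hPB
  have hfQM : (∑ j, (c j : ℝ) * Q j) ≤ (∑ j, (c j : ℝ) * PF j) := hPFmax _ hQB
  have hfQm : (∑ j, (c j : ℝ) * QF j) ≤ (∑ j, (c j : ℝ) * Q j) := hQFmin _ hQB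
  have hGPQ : (∑ j, (c' j : ℝ) * Q j) ≤ (∑ j, (c' j : ℝ) * P j) := hPmax _ hQB
  have hWpos : 0 < (∑ j, (c j : ℝ) * PF j) - (∑ j, (c j : ℝ) * QF j) := by linarith
  have UBright : ∀ y, y ∈ B → be < (∑ j, (c j : ℝ) * y j) →
      ((∑ j, (c' j : ℝ) * y j) - (∑ j, (c' j : ℝ) * PA j)) * (be - al) ≤ ω * ((∑ j, (c j : ℝ) * y j) - be)
      ∧ ((∑ j, (c' j : ℝ) * QA j) - (∑ j, (c' j : ℝ) * y j)) * (be - al) ≤ ω * ((∑ j, (c j : ℝ) * y j) - be) := by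
    intro y hy hfy
    obtain ⟨z, ⟨hzB, hzF0⟩, z', ⟨hz'B, hz'F0⟩, hid0, -⟩ :=
      chord hBconv (fun i => (c i : ℝ)) (fun i => (c' i : ℝ)) (show al < be by linarith) hx₁ hy haα hfy
    have hzF : (∑ j, (c j : ℝ) * z j) = be := hzF0
    have hz'F : (∑ j, (c j : ℝ) * z' j) = al := hz'F0
    have hzA : z ∈ A := hmemA z hzB (by rw [hzF]; linarith) (le_of_eq hzF)
    have hz'A : z' ∈ A := hmemA z' hz'B (le_of_eq hz'F.symm) (by rw [hz'F]; linarith)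
    obtain ⟨gz, hgz⟩ : ∃ r : ℝ, r = (∑ j, (c' j : ℝ) * z j) := ⟨_, rfl⟩
    obtain ⟨gz', hgz'⟩ : ∃ r : ℝ, r = (∑ j, (c' j : ℝ) * z' j) := ⟨_, rfl⟩
    have hid : ((∑ j, (c' j : ℝ) * y j) - gz) * (be - al)
        = (gz - gz') * ((∑ j, (c j : ℝ) * y j) - be) := by rw [hgz, hgz']; exact hid0
    have e1 : gz ≤ (∑ j, (c' j : ℝ) * PA j) := by rw [hgz]; exact hPAmax z hzA
    have e2 : (∑ j, (c' j : ℝ) * QA j) ≤ gz' := by rw [hgz']; exact hQAmin z' hz'A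
    have e3 : gz' ≤ (∑ j, (c' j : ℝ) * PA j) := by rw [hgz']; exact hPAmax z' hz'A
    have e4 : (∑ j, (c' j : ℝ) * QA j) ≤ gz := by rw [hgz]; exact hQAmin z hzA
    have hfy0 : (0:ℝ) ≤ (∑ j, (c j : ℝ) * y j) - be := by linarith
    constructor
    · linarith [hid, mul_nonneg (sub_nonneg.mpr e1) hL0.le,
        mul_le_mul_of_nonneg_right (show gz - gz' ≤ ω by linarith) hfy0]
    · linarith [hid, mul_nonneg (sub_nonneg.mpr e4) hL0.le,
        mul_le_mul_of_nonneg_right (show gz' - gz ≤ ω by linarith) hfy0]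
  have UBleft : ∀ y, y ∈ B → (∑ j, (c j : ℝ) * y j) < al →
      ((∑ j, (c' j : ℝ) * y j) - (∑ j, (c' j : ℝ) * PA j)) * (be - al) ≤ ω * (al - (∑ j, (c j : ℝ) * y j))
      ∧ ((∑ j, (c' j : ℝ) * QA j) - (∑ j, (c' j : ℝ) * y j)) * (be - al) ≤ ω * (al - (∑ j, (c j : ℝ) * y j)) := by
    intro y hy hfy
    obtain ⟨z, ⟨hzB, hzF0⟩, z', ⟨hz'B, hz'F0⟩, hid0, -⟩ :=
      chord hBconv (fun i => (-(c i : ℝ))) (fun i => (c' i : ℝ)) (show -be < -al by linarith) hx₂ hy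
        (show (∑ j, (-(c j : ℝ)) * (x₂ j : ℝ)) < -be by rw [sum_neg]; linarith)
        (show -al < (∑ j, (-(c j : ℝ)) * y j) by rw [sum_neg]; linarith)
    have hzF1 : (∑ j, (-(c j : ℝ)) * z j) = -al := hzF0
    rw [sum_neg] at hzF1
    have hzF : (∑ j, (c j : ℝ) * z j) = al := by linarith
    have hz'F1 : (∑ j, (-(c j : ℝ)) * z' j) = -be := hz'F0
    rw [sum_neg] at hz'F1
    have hz'F : (∑ j, (c j : ℝ) * z' j) = be := by linarith
    have hzA : z ∈ A := hmemA z hzB (le_of_eq hzF.symm) (by rw [hzF]; linarith)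
    have hz'A : z' ∈ A := hmemA z' hz'B (by rw [hz'F]; linarith) (le_of_eq hz'F)
    obtain ⟨gz, hgz⟩ : ∃ r : ℝ, r = (∑ j, (c' j : ℝ) * z j) := ⟨_, rfl⟩
    obtain ⟨gz', hgz'⟩ : ∃ r : ℝ, r = (∑ j, (c' j : ℝ) * z' j) := ⟨_, rfl⟩
    have hid1 : ((∑ j, (c' j : ℝ) * y j) - gz) * ((-al) - (-be))
        = (gz - gz') * ((∑ j, (-(c j : ℝ)) * y j) - (-al)) := by rw [hgz, hgz']; exact hid0
    rw [sum_neg] at hid1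
    have hid : ((∑ j, (c' j : ℝ) * y j) - gz) * (be - al)
        = (gz - gz') * (al - (∑ j, (c j : ℝ) * y j)) := by linear_combination hid1
    have e1 : gz ≤ (∑ j, (c' j : ℝ) * PA j) := by rw [hgz]; exact hPAmax z hzA
    have e2 : (∑ j, (c' j : ℝ) * QA j) ≤ gz' := by rw [hgz']; exact hQAmin z' hz'A
    have e3 : gz' ≤ (∑ j, (c' j : ℝ) * PA j) := by rw [hgz']; exact hPAmax z' hz'A
    have e4 : (∑ j, (c' j : ℝ) * QA j) ≤ gz := by rw [hgz]; exact hQAmin z hzA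
    have hfy0 : (0:ℝ) ≤ al - (∑ j, (c j : ℝ) * y j) := by linarith
    constructor
    · linarith [hid, mul_nonneg (sub_nonneg.mpr e1) hL0.le,
        mul_le_mul_of_nonneg_right (show gz - gz' ≤ ω by linarith) hfy0]
    · linarith [hid, mul_nonneg (sub_nonneg.mpr e4) hL0.le,
        mul_le_mul_of_nonneg_right (show gz' - gz ≤ ω by linarith) hfy0]
  have main : ((∑ j, (c' j : ℝ) * P j) - (∑ j, (c' j : ℝ) * Q j)) * (be - al) ≤ ω * ((∑ j, (c j : ℝ) * PF j) - (∑ j, (c j : ℝ) * QF j)) := by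
    rcases lt_or_ge be (∑ j, (c j : ℝ) * P j) with hPr | hPm1
    · rcases lt_or_ge be (∑ j, (c j : ℝ) * Q j) with hQr | hQm1
      · -- both right: apex via x₁
        obtain ⟨zP, ⟨hzPB, hzPF0⟩, _, ⟨_, _⟩, -, hapP0⟩ :=
          chord hBconv (fun i => (c i : ℝ)) (fun i => (c' i : ℝ)) (show al < be by linarith) hx₁ hPB haα hPr
        obtain ⟨zQ, ⟨hzQB, hzQF0⟩, _, ⟨_, _⟩, -, hapQ0⟩ :=
          chord hBconv (fun i => (c i : ℝ)) (fun i => (c' i : ℝ)) (show al < be by linarith) hx₁ hQB haα hQr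
        have hzPF : (∑ j, (c j : ℝ) * zP j) = be := hzPF0
        have hzQF : (∑ j, (c j : ℝ) * zQ j) = be := hzQF0
        have hzPA : zP ∈ A := hmemA _ hzPB (by rw [hzPF]; linarith) (le_of_eq hzPF)
        have hzQA : zQ ∈ A := hmemA _ hzQB (by rw [hzQF]; linarith) (le_of_eq hzQF)
        obtain ⟨gzP, hgzP⟩ : ∃ r : ℝ, r = (∑ j, (c' j : ℝ) * zP j) := ⟨_, rfl⟩
        obtain ⟨gzQ, hgzQ⟩ : ∃ r : ℝ, r = (∑ j, (c' j : ℝ) * zQ j) := ⟨_, rfl⟩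
        have hapP : ((∑ j, (c' j : ℝ) * P j) - (∑ j, (c' j : ℝ) * (x₁ j : ℝ))) * (be - (∑ j, (c j : ℝ) * (x₁ j : ℝ))) = (gzP - (∑ j, (c' j : ℝ) * (x₁ j : ℝ))) * ((∑ j, (c j : ℝ) * P j) - (∑ j, (c j : ℝ) * (x₁ j : ℝ))) := by
          rw [hgzP]; exact hapP0
        have hapQ : ((∑ j, (c' j : ℝ) * Q j) - (∑ j, (c' j : ℝ) * (x₁ j : ℝ))) * (be - (∑ j, (c j : ℝ) * (x₁ j : ℝ))) = (gzQ - (∑ j, (c' j : ℝ) * (x₁ j : ℝ))) * ((∑ j, (c j : ℝ) * Q j) - (∑ j, (c j : ℝ) * (x₁ j : ℝ))) := by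
          rw [hgzQ]; exact hapQ0
        have eP : gzP ≤ (∑ j, (c' j : ℝ) * PA j) := by rw [hgzP]; exact hPAmax _ hzPA
        have eQ : (∑ j, (c' j : ℝ) * QA j) ≤ gzQ := by rw [hgzQ]; exact hQAmin _ hzQA
        have hbeFA : (0:ℝ) < be - (∑ j, (c j : ℝ) * (x₁ j : ℝ)) := by linarith
        have hfP0 : (0:ℝ) < (∑ j, (c j : ℝ) * P j) - (∑ j, (c j : ℝ) * (x₁ j : ℝ)) := by linarith
        have hfQ0 : (0:ℝ) < (∑ j, (c j : ℝ) * Q j) - (∑ j, (c j : ℝ) * (x₁ j : ℝ)) := by linarith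
        have s1 : 0 ≤ gzP - (∑ j, (c' j : ℝ) * (x₁ j : ℝ)) := (mul_nonneg_iff_of_pos_right hfP0).mp
          (by rw [← hapP]; exact mul_nonneg (sub_nonneg.mpr hg1P) hbeFA.le)
        have hprodQ : ((∑ j, (c' j : ℝ) * (x₁ j : ℝ)) - gzQ) * ((∑ j, (c j : ℝ) * Q j) - (∑ j, (c j : ℝ) * (x₁ j : ℝ))) = ((∑ j, (c' j : ℝ) * (x₁ j : ℝ)) - (∑ j, (c' j : ℝ) * Q j)) * (be - (∑ j, (c j : ℝ) * (x₁ j : ℝ))) := by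
          linear_combination hapQ
        have s2 : 0 ≤ (∑ j, (c' j : ℝ) * (x₁ j : ℝ)) - gzQ := (mul_nonneg_iff_of_pos_right hfQ0).mp
          (by rw [hprodQ]; exact mul_nonneg (sub_nonneg.mpr hg1Q) hbeFA.le)
        have m1 : ((∑ j, (c' j : ℝ) * P j) - (∑ j, (c' j : ℝ) * (x₁ j : ℝ))) * (be - (∑ j, (c j : ℝ) * (x₁ j : ℝ))) ≤ (gzP - (∑ j, (c' j : ℝ) * (x₁ j : ℝ))) * ((∑ j, (c j : ℝ) * PF j) - (∑ j, (c j : ℝ) * (x₁ j : ℝ))) := by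
          linarith [hapP, mul_le_mul_of_nonneg_left (show (∑ j, (c j : ℝ) * P j) - (∑ j, (c j : ℝ) * (x₁ j : ℝ)) ≤ (∑ j, (c j : ℝ) * PF j) - (∑ j, (c j : ℝ) * (x₁ j : ℝ)) by linarith) s1]
        have m2 : ((∑ j, (c' j : ℝ) * (x₁ j : ℝ)) - (∑ j, (c' j : ℝ) * Q j)) * (be - (∑ j, (c j : ℝ) * (x₁ j : ℝ))) ≤ ((∑ j, (c' j : ℝ) * (x₁ j : ℝ)) - gzQ) * ((∑ j, (c j : ℝ) * PF j) - (∑ j, (c j : ℝ) * (x₁ j : ℝ))) := by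
          linarith [hapQ, mul_le_mul_of_nonneg_left (show (∑ j, (c j : ℝ) * Q j) - (∑ j, (c j : ℝ) * (x₁ j : ℝ)) ≤ (∑ j, (c j : ℝ) * PF j) - (∑ j, (c j : ℝ) * (x₁ j : ℝ)) by linarith) s2]
        have m3 : (gzP - gzQ) * ((∑ j, (c j : ℝ) * PF j) - (∑ j, (c j : ℝ) * (x₁ j : ℝ))) ≤ ω * ((∑ j, (c j : ℝ) * PF j) - (∑ j, (c j : ℝ) * (x₁ j : ℝ))) :=
          mul_le_mul_of_nonneg_right (by linarith [hc'wA, eP, eQ]) (by linarith)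
        linarith [m1, m2, m3, mul_le_mul_of_nonneg_left (show be - al ≤ be - (∑ j, (c j : ℝ) * (x₁ j : ℝ)) by linarith) (sub_nonneg.mpr hGPQ),
          mul_nonneg hω (show (0:ℝ) ≤ (∑ j, (c j : ℝ) * (x₁ j : ℝ)) - (∑ j, (c j : ℝ) * QF j) by linarith)]
      · rcases lt_or_ge (∑ j, (c j : ℝ) * Q j) al with hQl | hQm2
        · have u1 := (UBright P hPB hPr).1
          have u2 := (UBleft Q hQB hQl).2
          linarith [u1, u2, mul_le_mul_of_nonneg_right hc'wA hL0.le,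
            mul_nonneg hω (show (0:ℝ) ≤ (∑ j, (c j : ℝ) * PF j) - (∑ j, (c j : ℝ) * P j) by linarith),
            mul_nonneg hω (show (0:ℝ) ≤ (∑ j, (c j : ℝ) * Q j) - (∑ j, (c j : ℝ) * QF j) by linarith)]
        · have u1 := (UBright P hPB hPr).1
          have hQA2 : Q ∈ A := hmemA _ hQB hQm2 hQm1
          have u2 : (∑ j, (c' j : ℝ) * QA j) ≤ (∑ j, (c' j : ℝ) * Q j) := hQAmin _ hQA2
          linarith [u1, mul_le_mul_of_nonneg_right hc'wA hL0.le,
            mul_nonneg (sub_nonneg.mpr u2) hL0.le,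
            mul_nonneg hω (show (0:ℝ) ≤ (∑ j, (c j : ℝ) * PF j) - (∑ j, (c j : ℝ) * P j) by linarith),
            mul_nonneg hω (show (0:ℝ) ≤ al - (∑ j, (c j : ℝ) * QF j) by linarith)]
    · rcases lt_or_ge (∑ j, (c j : ℝ) * P j) al with hPl | hPm2
      · rcases lt_or_ge (∑ j, (c j : ℝ) * Q j) al with hQl | hQm2
        · -- both left: apex via x₂
          obtain ⟨zP, ⟨hzPB, hzPF0⟩, _, ⟨_, _⟩, -, hapP0⟩ :=
            chord hBconv (fun i => (-(c i : ℝ))) (fun i => (c' i : ℝ)) (show -be < -al by linarith) hx₂ hPB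
              (show (∑ j, (-(c j : ℝ)) * (x₂ j : ℝ)) < -be by rw [sum_neg]; linarith)
              (show -al < (∑ j, (-(c j : ℝ)) * P j) by rw [sum_neg]; linarith)
          obtain ⟨zQ, ⟨hzQB, hzQF0⟩, _, ⟨_, _⟩, -, hapQ0⟩ :=
            chord hBconv (fun i => (-(c i : ℝ))) (fun i => (c' i : ℝ)) (show -be < -al by linarith) hx₂ hQB
              (show (∑ j, (-(c j : ℝ)) * (x₂ j : ℝ)) < -be by rw [sum_neg]; linarith)
              (show -al < (∑ j, (-(c j : ℝ)) * Q j) by rw [sum_neg]; linarith)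
          have hzPF1 : (∑ j, (-(c j : ℝ)) * zP j) = -al := hzPF0
          rw [sum_neg] at hzPF1
          have hzPF : (∑ j, (c j : ℝ) * zP j) = al := by linarith
          have hzQF1 : (∑ j, (-(c j : ℝ)) * zQ j) = -al := hzQF0
          rw [sum_neg] at hzQF1
          have hzQF : (∑ j, (c j : ℝ) * zQ j) = al := by linarith
          have hzPA : zP ∈ A := hmemA _ hzPB (le_of_eq hzPF.symm) (by rw [hzPF]; linarith)
          have hzQA : zQ ∈ A := hmemA _ hzQB (le_of_eq hzQF.symm) (by rw [hzQF]; linarith)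
          obtain ⟨gzP, hgzP⟩ : ∃ r : ℝ, r = (∑ j, (c' j : ℝ) * zP j) := ⟨_, rfl⟩
          obtain ⟨gzQ, hgzQ⟩ : ∃ r : ℝ, r = (∑ j, (c' j : ℝ) * zQ j) := ⟨_, rfl⟩
          have hapP1 : ((∑ j, (c' j : ℝ) * P j) - (∑ j, (c' j : ℝ) * (x₂ j : ℝ))) * ((-al) - (∑ j, (-(c j : ℝ)) * (x₂ j : ℝ))) = (gzP - (∑ j, (c' j : ℝ) * (x₂ j : ℝ))) * ((∑ j, (-(c j : ℝ)) * P j) - (∑ j, (-(c j : ℝ)) * (x₂ j : ℝ))) := by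
            rw [hgzP]; exact hapP0
          simp only [sum_neg] at hapP1
          have hapP : ((∑ j, (c' j : ℝ) * P j) - (∑ j, (c' j : ℝ) * (x₂ j : ℝ))) * ((∑ j, (c j : ℝ) * (x₂ j : ℝ)) - al) = (gzP - (∑ j, (c' j : ℝ) * (x₂ j : ℝ))) * ((∑ j, (c j : ℝ) * (x₂ j : ℝ)) - (∑ j, (c j : ℝ) * P j)) := by
            linear_combination hapP1
          have hapQ1 : ((∑ j, (c' j : ℝ) * Q j) - (∑ j, (c' j : ℝ) * (x₂ j : ℝ))) * ((-al) - (∑ j, (-(c j : ℝ)) * (x₂ j : ℝ))) = (gzQ - (∑ j, (c' j : ℝ) * (x₂ j : ℝ))) * ((∑ j, (-(c j : ℝ)) * Q j) - (∑ j, (-(c j : ℝ)) * (x₂ j : ℝ))) := by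
            rw [hgzQ]; exact hapQ0
          simp only [sum_neg] at hapQ1
          have hapQ : ((∑ j, (c' j : ℝ) * Q j) - (∑ j, (c' j : ℝ) * (x₂ j : ℝ))) * ((∑ j, (c j : ℝ) * (x₂ j : ℝ)) - al) = (gzQ - (∑ j, (c' j : ℝ) * (x₂ j : ℝ))) * ((∑ j, (c j : ℝ) * (x₂ j : ℝ)) - (∑ j, (c j : ℝ) * Q j)) := by
            linear_combination hapQ1
          have eP : gzP ≤ (∑ j, (c' j : ℝ) * PA j) := by rw [hgzP]; exact hPAmax _ hzPA
          have eQ : (∑ j, (c' j : ℝ) * QA j) ≤ gzQ := by rw [hgzQ]; exact hQAmin _ hzQA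
          have hFBal : (0:ℝ) < (∑ j, (c j : ℝ) * (x₂ j : ℝ)) - al := by linarith
          have hfP0 : (0:ℝ) < (∑ j, (c j : ℝ) * (x₂ j : ℝ)) - (∑ j, (c j : ℝ) * P j) := by linarith
          have hfQ0 : (0:ℝ) < (∑ j, (c j : ℝ) * (x₂ j : ℝ)) - (∑ j, (c j : ℝ) * Q j) := by linarith
          have s1 : 0 ≤ gzP - (∑ j, (c' j : ℝ) * (x₂ j : ℝ)) := (mul_nonneg_iff_of_pos_right hfP0).mp
            (by rw [← hapP]; exact mul_nonneg (sub_nonneg.mpr hg2P) hFBal.le)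
          have hprodQ : ((∑ j, (c' j : ℝ) * (x₂ j : ℝ)) - gzQ) * ((∑ j, (c j : ℝ) * (x₂ j : ℝ)) - (∑ j, (c j : ℝ) * Q j)) = ((∑ j, (c' j : ℝ) * (x₂ j : ℝ)) - (∑ j, (c' j : ℝ) * Q j)) * ((∑ j, (c j : ℝ) * (x₂ j : ℝ)) - al) := by
            linear_combination hapQ
          have s2 : 0 ≤ (∑ j, (c' j : ℝ) * (x₂ j : ℝ)) - gzQ := (mul_nonneg_iff_of_pos_right hfQ0).mp
            (by rw [hprodQ]; exact mul_nonneg (sub_nonneg.mpr hg2Q) hFBal.le)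
          have m1 : ((∑ j, (c' j : ℝ) * P j) - (∑ j, (c' j : ℝ) * (x₂ j : ℝ))) * ((∑ j, (c j : ℝ) * (x₂ j : ℝ)) - al) ≤ (gzP - (∑ j, (c' j : ℝ) * (x₂ j : ℝ))) * ((∑ j, (c j : ℝ) * (x₂ j : ℝ)) - (∑ j, (c j : ℝ) * QF j)) := by
            linarith [hapP, mul_le_mul_of_nonneg_left (show (∑ j, (c j : ℝ) * (x₂ j : ℝ)) - (∑ j, (c j : ℝ) * P j) ≤ (∑ j, (c j : ℝ) * (x₂ j : ℝ)) - (∑ j, (c j : ℝ) * QF j) by linarith) s1]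
          have m2 : ((∑ j, (c' j : ℝ) * (x₂ j : ℝ)) - (∑ j, (c' j : ℝ) * Q j)) * ((∑ j, (c j : ℝ) * (x₂ j : ℝ)) - al) ≤ ((∑ j, (c' j : ℝ) * (x₂ j : ℝ)) - gzQ) * ((∑ j, (c j : ℝ) * (x₂ j : ℝ)) - (∑ j, (c j : ℝ) * QF j)) := by
            linarith [hapQ, mul_le_mul_of_nonneg_left (show (∑ j, (c j : ℝ) * (x₂ j : ℝ)) - (∑ j, (c j : ℝ) * Q j) ≤ (∑ j, (c j : ℝ) * (x₂ j : ℝ)) - (∑ j, (c j : ℝ) * QF j) by linarith) s2]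
          have m3 : (gzP - gzQ) * ((∑ j, (c j : ℝ) * (x₂ j : ℝ)) - (∑ j, (c j : ℝ) * QF j)) ≤ ω * ((∑ j, (c j : ℝ) * (x₂ j : ℝ)) - (∑ j, (c j : ℝ) * QF j)) :=
            mul_le_mul_of_nonneg_right (by linarith [hc'wA, eP, eQ]) (by linarith)
          linarith [m1, m2, m3, mul_le_mul_of_nonneg_left (show be - al ≤ (∑ j, (c j : ℝ) * (x₂ j : ℝ)) - al by linarith) (sub_nonneg.mpr hGPQ),
            mul_nonneg hω (show (0:ℝ) ≤ (∑ j, (c j : ℝ) * PF j) - (∑ j, (c j : ℝ) * (x₂ j : ℝ)) by linarith)]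
        · have u1 := (UBleft P hPB hPl).1
          rcases lt_or_ge be (∑ j, (c j : ℝ) * Q j) with hQr | hQm1'
          · have u2 := (UBright Q hQB hQr).2
            linarith [u1, u2, mul_le_mul_of_nonneg_right hc'wA hL0.le,
              mul_nonneg hω (show (0:ℝ) ≤ (∑ j, (c j : ℝ) * PF j) - (∑ j, (c j : ℝ) * Q j) by linarith),
              mul_nonneg hω (show (0:ℝ) ≤ (∑ j, (c j : ℝ) * P j) - (∑ j, (c j : ℝ) * QF j) by linarith)]
          · have hQA2 : Q ∈ A := hmemA _ hQB hQm2 hQm1'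
            have u2 : (∑ j, (c' j : ℝ) * QA j) ≤ (∑ j, (c' j : ℝ) * Q j) := hQAmin _ hQA2
            linarith [u1, mul_le_mul_of_nonneg_right hc'wA hL0.le,
              mul_nonneg (sub_nonneg.mpr u2) hL0.le,
              mul_nonneg hω (show (0:ℝ) ≤ (∑ j, (c j : ℝ) * PF j) - be by linarith),
              mul_nonneg hω (show (0:ℝ) ≤ (∑ j, (c j : ℝ) * P j) - (∑ j, (c j : ℝ) * QF j) by linarith)]
      · -- P mid
        have hPA2 : P ∈ A := hmemA _ hPB hPm2 hPm1
        have u1 : (∑ j, (c' j : ℝ) * P j) ≤ (∑ j, (c' j : ℝ) * PA j) := hPAmax _ hPA2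
        rcases lt_or_ge be (∑ j, (c j : ℝ) * Q j) with hQr | hQm1'
        · have u2 := (UBright Q hQB hQr).2
          linarith [u2, mul_le_mul_of_nonneg_right hc'wA hL0.le,
            mul_nonneg (sub_nonneg.mpr u1) hL0.le,
            mul_nonneg hω (show (0:ℝ) ≤ (∑ j, (c j : ℝ) * PF j) - (∑ j, (c j : ℝ) * Q j) by linarith),
            mul_nonneg hω (show (0:ℝ) ≤ al - (∑ j, (c j : ℝ) * QF j) by linarith)]
        · rcases lt_or_ge (∑ j, (c j : ℝ) * Q j) al with hQl | hQm2'
          · have u2 := (UBleft Q hQB hQl).2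
            linarith [u2, mul_le_mul_of_nonneg_right hc'wA hL0.le,
              mul_nonneg (sub_nonneg.mpr u1) hL0.le,
              mul_nonneg hω (show (0:ℝ) ≤ (∑ j, (c j : ℝ) * PF j) - be by linarith),
              mul_nonneg hω (show (0:ℝ) ≤ (∑ j, (c j : ℝ) * Q j) - (∑ j, (c j : ℝ) * QF j) by linarith)]
          · have hQA2 : Q ∈ A := hmemA _ hQB hQm2' hQm1'
            have u2 : (∑ j, (c' j : ℝ) * QA j) ≤ (∑ j, (c' j : ℝ) * Q j) := hQAmin _ hQA2
            linarith [mul_le_mul_of_nonneg_right hc'wA hL0.le,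
              mul_nonneg (sub_nonneg.mpr u1) hL0.le,
              mul_nonneg (sub_nonneg.mpr u2) hL0.le,
              mul_nonneg hω (show (0:ℝ) ≤ ((∑ j, (c j : ℝ) * PF j) - (∑ j, (c j : ℝ) * QF j)) - (be - al) by linarith)]
  have hfin1 := mul_le_mul_of_nonneg_right hcw hL0.le
  have hfin2 := mul_lt_mul_of_pos_left hLgt hWpos
  linarith [main, hfin1, hfin2]
end

section
/- Let Ŝ ⊆ ℤ^k × ℤ be a finite set and let m be a positive integer such that every fiber of Ŝ has no gaps larger than m; that is, for every y ∈ ℤ^k and all t₁, t₂ with (y, t₁) ∈ Ŝ, (y, t₂) ∈ Ŝ and t₂ − t₁ > m, there exists t with t₁ < t < t₂ and (y, t) ∈ Ŝ. Define Z = Ŝ ∖ ⋃_{l=1}^m (Ŝ + l), where Ŝ + l = {(y, t + l) : (y, t) ∈ Ŝ}. Then the projection pr(y, t) = y restricted to Z is injective, and pr(Z) = pr(Ŝ); equivalently, for every y in pr(Ŝ) there is exactly one t ∈ ℤ with (y, t) ∈ Z, namely the minimum of the fiber {t : (y, t) ∈ Ŝ}. -/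
/-!
Along each fiber, an element `t` of `Ŝ` survives the removal of the translates `Ŝ + l`,
`1 ≤ l ≤ m`, exactly when no `t - l` with `1 ≤ l ≤ m` lies in the fiber. If `t` is not the
least element of its fiber, its predecessor `s` in the fiber exists, and the gap condition forces
`t - s ≤ m`; so exactly the fiber minima survive, and a finite fiber has one.
-/

open Set

theorem Int.exists_sub_mem_Icc_of_gaps_le {F : Set ℤ} {m : ℤ}
    (hgaps : ∀ t₁ t₂ : ℤ, t₁ ∈ F → t₂ ∈ F → t₂ - t₁ > m → ∃ t : ℤ, t₁ < t ∧ t < t₂ ∧ t ∈ F)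
    {s t : ℤ} (hs : s ∈ F) (ht : t ∈ F) (hst : s < t) :
    ∃ l ∈ Finset.Icc 1 m, t - l ∈ F := by
  obtain ⟨p, ⟨hpF, hpt⟩, hpred⟩ :=
    Int.exists_greatest_of_bdd (P := fun x => x ∈ F ∧ x < t) ⟨t, fun _ h => h.2.le⟩ ⟨s, hs, hst⟩
  refine ⟨t - p, Finset.mem_Icc.2 ⟨by omega, ?_⟩, by simpa using hpF⟩
  by_contra! hgap
  obtain ⟨u, hpu, hut, hu⟩ := hgaps p t hpF ht hgap
  exact (hpred u ⟨hu, hut⟩).not_gt hpu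

theorem Int.isLeast_iff_forall_sub_notMem_of_gaps_le {F : Set ℤ} {m : ℤ}
    (hgaps : ∀ t₁ t₂ : ℤ, t₁ ∈ F → t₂ ∈ F → t₂ - t₁ > m → ∃ t : ℤ, t₁ < t ∧ t < t₂ ∧ t ∈ F)
    {t : ℤ} (ht : t ∈ F) :
    IsLeast F t ↔ ∀ l ∈ Finset.Icc 1 m, t - l ∉ F := by
  constructor
  · intro hleast l hl hmem
    have := hleast.2 hmem
    grind
  · intro hnone
    refine ⟨ht, fun s hs => ?_⟩
    by_contra! hts
    obtain ⟨l, hl, hmem⟩ := Int.exists_sub_mem_Icc_of_gaps_le hgaps hs ht hts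
    exact hnone l hl hmem

theorem mk_mem_image_shift_iff {α : Type*} (S : Set (α × ℤ)) (l : ℤ) (y : α)
    (t : ℤ) : (y, t) ∈ (fun p : α × ℤ => (p.1, p.2 + l)) '' S ↔ (y, t - l) ∈ S := by
  constructor
  · rintro ⟨p, hp, hpyt⟩
    obtain ⟨rfl, rfl⟩ := Prod.mk.inj hpyt
    simpa using hp
  · exact fun h => ⟨(y, t - l), h, by simp⟩

theorem mk_mem_diff_iUnion_image_shift_iff_isLeast {α : Type*} (S : Set (α × ℤ)) (m : ℤ)
    (hgaps : ∀ (y : α) (t₁ t₂ : ℤ), (y, t₁) ∈ S → (y, t₂) ∈ S →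
      t₂ - t₁ > m → ∃ t : ℤ, t₁ < t ∧ t < t₂ ∧ (y, t) ∈ S) (y : α) (t : ℤ) :
    (y, t) ∈ S \ ⋃ l ∈ Finset.Icc (1 : ℤ) m, (fun p : α × ℤ => (p.1, p.2 + l)) '' S ↔
      IsLeast {t' : ℤ | (y, t') ∈ S} t := by
  simp only [mem_sdiff, mem_iUnion₂, mk_mem_image_shift_iff, not_exists]
  constructor
  · rintro ⟨ht, hnone⟩
    exact (Int.isLeast_iff_forall_sub_notMem_of_gaps_le (hgaps y) ht).2 hnone
  · intro hleast
    exact ⟨hleast.1, (Int.isLeast_iff_forall_sub_notMem_of_gaps_le (hgaps y) hleast.1).1 hleast⟩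

theorem Set.Finite.exists_isLeast_fiber {α : Type*} {S : Set (α × ℤ)} (hS : S.Finite) {y : α}
    {t : ℤ} (ht : (y, t) ∈ S) : ∃ t₀, IsLeast {t' : ℤ | (y, t') ∈ S} t₀ := by
  have hfin : {t' : ℤ | (y, t') ∈ S}.Finite := hS.preimage (Prod.mk_right_injective y).injOn
  obtain ⟨b, hb⟩ := hfin.bddBelow
  obtain ⟨t₀, ht₀, hmin⟩ := Int.exists_least_of_bdd (P := fun t' => (y, t') ∈ S) ⟨b, hb⟩ ⟨t, ht⟩
  exact ⟨t₀, ht₀, hmin⟩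

theorem stmt_12_general (k : ℕ) (S : Set ((Fin k → ℤ) × ℤ)) (hSfin : S.Finite)
    (m : ℤ)
    (hgaps : ∀ (y : Fin k → ℤ) (t₁ t₂ : ℤ), (y, t₁) ∈ S → (y, t₂) ∈ S →
      t₂ - t₁ > m → ∃ t : ℤ, t₁ < t ∧ t < t₂ ∧ (y, t) ∈ S)
    (Z : Set ((Fin k → ℤ) × ℤ))
    (hZ : Z = S \ ⋃ l ∈ Finset.Icc (1 : ℤ) m, (fun p : (Fin k → ℤ) × ℤ => (p.1, p.2 + l)) '' S) :
    Set.InjOn Prod.fst Z ∧ Prod.fst '' Z = Prod.fst '' S ∧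
      ∀ y ∈ Prod.fst '' S, ∀ t : ℤ, ((y, t) ∈ Z ↔ IsLeast {t' : ℤ | (y, t') ∈ S} t) := by
  have key : ∀ y t, (y, t) ∈ Z ↔ IsLeast {t' : ℤ | (y, t') ∈ S} t := by
    subst hZ
    exact mk_mem_diff_iUnion_image_shift_iff_isLeast S m hgaps
  refine ⟨?_, ?_, fun y _ t => key y t⟩
  · rintro ⟨y, t₁⟩ h₁ ⟨_, t₂⟩ h₂ (rfl : y = _)
    rw [((key y t₁).1 h₁).unique ((key y t₂).1 h₂)]
  · refine (image_mono (hZ ▸ sdiff_subset)).antisymm ?_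
    rintro _ ⟨⟨y, t⟩, ht, rfl⟩
    obtain ⟨t₀, ht₀⟩ := hSfin.exists_isLeast_fiber ht
    exact ⟨(y, t₀), (key y t₀).2 ht₀, rfl⟩

theorem stmt_12 (k : ℕ) (S : Set ((Fin k → ℤ) × ℤ)) (hSfin : S.Finite)
    (m : ℤ) (hm : 0 < m)
    (hgaps : ∀ (y : Fin k → ℤ) (t₁ t₂ : ℤ), (y, t₁) ∈ S → (y, t₂) ∈ S →
      t₂ - t₁ > m → ∃ t : ℤ, t₁ < t ∧ t < t₂ ∧ (y, t) ∈ S)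
    (Z : Set ((Fin k → ℤ) × ℤ))
    (hZ : Z = S \ ⋃ l ∈ Finset.Icc (1 : ℤ) m, (fun p : (Fin k → ℤ) × ℤ => (p.1, p.2 + l)) '' S) :
    Set.InjOn Prod.fst Z ∧ Prod.fst '' Z = Prod.fst '' S ∧
      ∀ y ∈ Prod.fst '' S, ∀ t : ℤ, ((y, t) ∈ Z ↔ IsLeast {t' : ℤ | (y, t') ∈ S} t) :=
  stmt_12_general k S hSfin m hgaps Z hZ
end

section
/- Let u₁, …, u_d ∈ ℤ^d be linearly independent vectors (over ℝ), let K = {α₁u₁ + ⋯ + α_d u_d : α_i ≥ 0 for all i} be the cone they span, and let Π = {α₁u₁ + ⋯ + α_d u_d : 0 ≤ α_i ≤ 1 for all i} be the parallelepiped they span. Call a nonzero point v ∈ Π ∩ ℤ^d indecomposable if v cannot be written as v = v₁ + v₂ with v₁, v₂ nonzero points of Π ∩ ℤ^d. Then every integer point of K is a finite sum of indecomposable points of Π ∩ ℤ^d; that is, K ∩ ℤ^d is contained in the additive submonoid of ℤ^d generated by the set of indecomposable points of Π ∩ ℤ^d. -/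
open Matrix

/-- Generic strong-induction lemma: if a ℕ-valued measure is additive on `P`-points and
positive on nonzero `P`-points, then every nonzero `P`-point lies in the closure of the
set of indecomposable points. -/
lemma aux_indec {d : ℕ} (P : (Fin d → ℤ) → Prop) (N : (Fin d → ℤ) → ℕ)
    (hadd : ∀ v₁ v₂, P v₁ → P v₂ → N (v₁ + v₂) = N v₁ + N v₂)
    (hpos : ∀ v, P v → v ≠ 0 → N v ≠ 0) :
    ∀ v, P v → v ≠ 0 →
      v ∈ AddSubmonoid.closure
        {v : Fin d → ℤ | P v ∧ v ≠ 0 ∧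
          ¬∃ v₁ v₂ : Fin d → ℤ, v₁ ≠ 0 ∧ v₂ ≠ 0 ∧ P v₁ ∧ P v₂ ∧ v = v₁ + v₂} := by
  intro v hv hv0
  generalize hn : N v = n
  induction n using Nat.strong_induction_on generalizing v with
  | _ n ih =>
    by_cases hdec : ∃ v₁ v₂ : Fin d → ℤ, v₁ ≠ 0 ∧ v₂ ≠ 0 ∧ P v₁ ∧ P v₂ ∧ v = v₁ + v₂
    · obtain ⟨v₁, v₂, h1, h2, hP1, hP2, hsum⟩ := hdec
      have hN : n = N v₁ + N v₂ := by rw [← hn, hsum, hadd v₁ v₂ hP1 hP2]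
      have hN1 : N v₁ < n := by
        have := hpos v₂ hP2 h2; omega
      have hN2 : N v₂ < n := by
        have := hpos v₁ hP1 h1; omega
      rw [hsum]
      exact add_mem (ih _ hN1 v₁ hP1 h1 rfl) (ih _ hN2 v₂ hP2 h2 rfl)
    · exact AddSubmonoid.subset_closure ⟨hv, hv0, hdec⟩

theorem stmt_14 (d : ℕ) (u : Fin d → Fin d → ℤ)
    (hu : LinearIndependent ℝ (fun i => (fun j => (u i j : ℝ))))
    (K Par : Set (Fin d → ℝ))
    (hK : K = {x | ∃ α : Fin d → ℝ, (∀ i, 0 ≤ α i) ∧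
      x = ∑ i, α i • (fun j => (u i j : ℝ))})
    (hPar : Par = {x | ∃ α : Fin d → ℝ, (∀ i, 0 ≤ α i ∧ α i ≤ 1) ∧
      x = ∑ i, α i • (fun j => (u i j : ℝ))}) :
    ∀ m : Fin d → ℤ, (fun j => (m j : ℝ)) ∈ K →
      m ∈ AddSubmonoid.closure
        {v : Fin d → ℤ | (fun j => (v j : ℝ)) ∈ Par ∧ v ≠ 0 ∧
          ¬∃ v₁ v₂ : Fin d → ℤ, v₁ ≠ 0 ∧ v₂ ≠ 0 ∧
            (fun j => (v₁ j : ℝ)) ∈ Par ∧ (fun j => (v₂ j : ℝ)) ∈ Par ∧ v = v₁ + v₂} := by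
  classical
  set A : Matrix (Fin d) (Fin d) ℤ := Matrix.of u with hA
  set B : Matrix (Fin d) (Fin d) ℝ := (Int.castRingHom ℝ).mapMatrix A with hB
  have hBrow : ∀ i, B i = (fun j => (u i j : ℝ)) := fun i => rfl
  -- sums of scalar multiples of rows are `vecMul`
  have hsum_vecMul : ∀ α : Fin d → ℝ, (∑ i, α i • (fun j => (u i j : ℝ))) = α ᵥ* B := by
    intro α; ext j
    simp [Matrix.vecMul, dotProduct, hB, hA, Finset.sum_apply]
  -- determinant is nonzero
  have hunit : IsUnit B := by
    rw [← Matrix.linearIndependent_rows_iff_isUnit]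
    exact hu
  have hdetB : B.det ≠ 0 := by
    intro h
    exact (Matrix.isUnit_iff_isUnit_det B).mp hunit |>.ne_zero (by rw [h])
  have hdetcast : ((A.det : ℤ) : ℝ) = B.det := by
    rw [hB, ← RingHom.map_det]; rfl
  have hdetA : A.det ≠ 0 := by
    intro h; apply hdetB; rw [← hdetcast, h, Int.cast_zero]
  -- the measure
  set w : (Fin d → ℤ) → (Fin d → ℤ) := fun v => v ᵥ* A.adjugate with hw
  -- key: cast of w v equals det • α for the coefficient vector α
  have hkey : ∀ (v : Fin d → ℤ) (α : Fin d → ℝ),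
      (fun j => (v j : ℝ)) = α ᵥ* B → ∀ i, ((w v i : ℤ) : ℝ) = (A.det : ℝ) * α i := by
    intro v α hv i
    have hcast : ((w v i : ℤ) : ℝ) = ((fun j => (v j : ℝ)) ᵥ* B.adjugate) i := by
      rw [hw]
      have := RingHom.map_vecMul (Int.castRingHom ℝ) A.adjugate v i
      simp only [Int.coe_castRingHom] at this
      rw [this]
      congr 1
      · rw [hB, ← RingHom.map_adjugate]; rfl
    rw [hcast, hv, Matrix.vecMul_vecMul, Matrix.mul_adjugate]
    have : (α ᵥ* (B.det • (1 : Matrix (Fin d) (Fin d) ℝ))) i = B.det * α i := by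
      simp [Matrix.vecMul, dotProduct, Matrix.smul_apply, Matrix.one_apply,
        mul_comm, Finset.sum_ite_eq]
    rw [this, ← hdetcast]
  -- membership in Par gives coefficients
  have hParCoef : ∀ v : Fin d → ℤ, (fun j => (v j : ℝ)) ∈ Par →
      ∃ α : Fin d → ℝ, (∀ i, 0 ≤ α i ∧ α i ≤ 1) ∧ (fun j => (v j : ℝ)) = α ᵥ* B := by
    intro v hv
    rw [hPar] at hv
    obtain ⟨α, h1, h2⟩ := hv
    exact ⟨α, h1, by rw [h2, hsum_vecMul]⟩
  -- sign of w values on Par points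
  have hsign : ∀ v : Fin d → ℤ, (fun j => (v j : ℝ)) ∈ Par →
      ∀ i, 0 ≤ (A.det : ℝ) * ((w v i : ℤ) : ℝ) := by
    intro v hv i
    obtain ⟨α, hα, hveq⟩ := hParCoef v hv
    rw [hkey v α hveq i, ← mul_assoc]
    exact mul_nonneg (mul_self_nonneg _) (hα i).1
  set N : (Fin d → ℤ) → ℕ := fun v => ∑ i, (w v i).natAbs with hN
  set P : (Fin d → ℤ) → Prop := fun v => (fun j => (v j : ℝ)) ∈ Par with hP
  -- additivity of N on Par points
  have hadd : ∀ v₁ v₂, P v₁ → P v₂ → N (v₁ + v₂) = N v₁ + N v₂ := by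
    intro v₁ v₂ h1 h2
    have hwadd : w (v₁ + v₂) = w v₁ + w v₂ := by
      rw [hw]; exact Matrix.add_vecMul _ _ _
    rw [hN]
    simp only [hwadd, Pi.add_apply]
    rw [← Finset.sum_add_distrib]
    apply Finset.sum_congr rfl
    intro i _
    rcases lt_trichotomy A.det 0 with hD | hD | hD
    · have s1 : w v₁ i ≤ 0 := by
        have := hsign v₁ h1 i
        by_contra hcon; push_neg at hcon
        have : (A.det : ℝ) * ((w v₁ i : ℤ) : ℝ) < 0 :=
          mul_neg_of_neg_of_pos (by exact_mod_cast hD) (by exact_mod_cast hcon)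
        linarith [hsign v₁ h1 i]
      have s2 : w v₂ i ≤ 0 := by
        have := hsign v₂ h2 i
        by_contra hcon; push_neg at hcon
        have : (A.det : ℝ) * ((w v₂ i : ℤ) : ℝ) < 0 :=
          mul_neg_of_neg_of_pos (by exact_mod_cast hD) (by exact_mod_cast hcon)
        linarith [hsign v₂ h2 i]
      exact Int.natAbs_add_of_nonpos s1 s2
    · exact absurd hD hdetA
    · have s1 : 0 ≤ w v₁ i := by
        have := hsign v₁ h1 i
        by_contra hcon; push_neg at hcon
        have : (A.det : ℝ) * ((w v₁ i : ℤ) : ℝ) < 0 :=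
          mul_neg_of_pos_of_neg (by exact_mod_cast hD) (by exact_mod_cast hcon)
        linarith [hsign v₁ h1 i]
      have s2 : 0 ≤ w v₂ i := by
        have := hsign v₂ h2 i
        by_contra hcon; push_neg at hcon
        have : (A.det : ℝ) * ((w v₂ i : ℤ) : ℝ) < 0 :=
          mul_neg_of_pos_of_neg (by exact_mod_cast hD) (by exact_mod_cast hcon)
        linarith [hsign v₂ h2 i]
      exact Int.natAbs_add_of_nonneg s1 s2
  -- positivity of N on nonzero Par points
  have hpos : ∀ v, P v → v ≠ 0 → N v ≠ 0 := by
    intro v hv hv0 hNv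
    apply hv0
    obtain ⟨α, hα, hveq⟩ := hParCoef v hv
    have hαz : ∀ i, α i = 0 := by
      intro i
      have hwz : w v i = 0 := by
        have := Finset.sum_eq_zero_iff.mp (hN ▸ hNv) i (Finset.mem_univ i)
        omega
      have := hkey v α hveq i
      rw [hwz] at this
      simp only [Int.cast_zero] at this
      rcases mul_eq_zero.mp this.symm with h | h
      · exact absurd h (by exact_mod_cast hdetA)
      · exact h
    have : (fun j => (v j : ℝ)) = 0 := by
      rw [hveq]
      ext j
      simp [Matrix.vecMul, dotProduct, hαz]
    ext j
    have := congrFun this j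
    simpa using this
  have hmem := aux_indec P N hadd hpos
  -- now the main argument
  intro m hm
  rw [hK] at hm
  obtain ⟨α, hα, hmeq⟩ := hm
  have hm' : ∀ j, ((m j : ℝ)) = ∑ i, α i * (u i j : ℝ) := by
    intro j
    have := congrFun hmeq j
    simpa [Finset.sum_apply] using this
  set r : Fin d → ℤ := m - ∑ i, ⌊α i⌋ • u i with hr
  have hrcast : (fun j => (r j : ℝ)) = ∑ i, Int.fract (α i) • (fun j => (u i j : ℝ)) := by
    ext j
    simp only [hr, Pi.sub_apply, Finset.sum_apply, Pi.smul_apply, smul_eq_mul, zsmul_eq_mul]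
    push_cast
    rw [hm' j, ← Finset.sum_sub_distrib]
    refine Finset.sum_congr rfl fun i _ => ?_
    simp only [Pi.mul_apply, Pi.intCast_apply, Int.cast_mul, Int.fract]
    push_cast
    ring
  have hrPar : (fun j => (r j : ℝ)) ∈ Par := by
    rw [hPar]
    exact ⟨fun i => Int.fract (α i),
      fun i => ⟨Int.fract_nonneg _, (Int.fract_lt_one _).le⟩, hrcast⟩
  -- each u i is in Par
  have huPar : ∀ i, (fun j => (u i j : ℝ)) ∈ Par := by
    intro i
    rw [hPar]
    refine ⟨fun k => if k = i then 1 else 0, fun k => by by_cases h : k = i <;> simp [h], ?_⟩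
    ext j
    simp [Finset.sum_apply, ite_smul, apply_ite (fun f : Fin d → ℝ => f j), Finset.sum_ite_eq']
  have hune : ∀ i, u i ≠ 0 := by
    intro i hcon
    apply hu.ne_zero i
    ext j
    simp [congrFun hcon j]
  -- assemble
  have hmsplit : m = r + ∑ i, ⌊α i⌋ • u i := by
    rw [hr]; abel
  rw [hmsplit]
  apply add_mem
  · by_cases hr0 : r = 0
    · rw [hr0]; exact zero_mem _
    · exact hmem r hrPar hr0
  · apply sum_mem
    intro i _
    rw [show ⌊α i⌋ = ((⌊α i⌋.toNat : ℕ) : ℤ) from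
      (Int.toNat_of_nonneg (Int.floor_nonneg.mpr (hα i))).symm]
    rw [natCast_zsmul]
    exact nsmul_mem (hmem (u i) (huPar i) (hune i)) _
end

section
/- Let a₁, …, a_d ∈ ℕ^k be nonzero vectors with non-negative integer coordinates, let S = {μ₁a₁ + ⋯ + μ_d a_d : μ_i ∈ ℕ} be the additive semigroup they generate, and let f(S;X) = ∑_{m ∈ S} X^m be the multivariate formal power series in variables X₁, …, X_k over ℤ whose coefficient of X^m = X₁^{m₁}⋯X_k^{m_k} is 1 if m ∈ S and 0 otherwise. Then the power series (1 − X^{a₁})(1 − X^{a₂}) ⋯ (1 − X^{a_d}) · f(S;X) is a polynomial, i.e., it has only finitely many nonzero coefficients. -/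
/-!
Substitute `tᵢ ↦ X^{aᵢ}` into power series in variables `t₁, …, t_d`. Choosing in every fibre
of `ν ↦ ∑ νᵢ aᵢ` the representative that is least for the lexicographic monomial order, `f`
becomes the image of the indicator series `g` of these least representatives, and
`∏ (1 - X^{aᵢ}) f` the image of `∏ (1 - tᵢ) g`. The non-least representatives form an upper set
of `ℕ^d` (adding the same vector to two representatives preserves their order), so by Dickson's
lemma they are generated by finitely many vectors, all bounded by some `B`. Once `νᵢ > Bᵢ`,
membership of `ν` no longer depends on `νᵢ`, so the coefficients of `(1 - tᵢ) g` vanish there.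
Hence `∏ (1 - tᵢ) g` is a polynomial, and so is its image.
-/

open MvPowerSeries Finsupp

theorem IsLowerSet.exists_tsub_single_mem_iff {σ : Type*} [Finite σ] {L : Set (σ →₀ ℕ)}
    (hL : IsLowerSet L) :
    ∃ B : σ →₀ ℕ, ∀ ν i, B i < ν i → (ν - single i 1 ∈ L ↔ ν ∈ L) := by
  have hmin : {x | Minimal (· ∈ Lᶜ) x}.Finite :=
    WellQuasiOrderedLE.finite_of_isAntichain (setOfPred_minimal_antichain _)
  refine ⟨hmin.toFinset.sup id, fun ν i hi => ⟨fun hν => ?_, fun hν => hL tsub_le_self hν⟩⟩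
  by_contra hνL
  obtain ⟨z, hzν, hz⟩ := exists_minimal_le_of_wellFoundedLT (· ∈ Lᶜ) ν hνL
  have hzB : z ≤ hmin.toFinset.sup id :=
    Finset.le_sup (f := id) (hmin.mem_toFinset.2 hz)
  refine hL.compl (show z ≤ ν - single i 1 from fun j => ?_) hz.prop hν
  rcases eq_or_ne j i with rfl | hji
  · have := hzB j
    simp only [tsub_apply, single_eq_same]
    omega
  · simpa [single_eq_of_ne hji] using hzν j

noncomputable def indicatorSeries {σ : Type*} (R : Type*) [Zero R] [One R]
    (s : Set (σ →₀ ℕ)) : MvPowerSeries σ R :=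
  s.indicator 1

theorem coeff_indicatorSeries {σ R : Type*} [Semiring R] (s : Set (σ →₀ ℕ)) (ν : σ →₀ ℕ) :
    coeff ν (indicatorSeries R s) = s.indicator 1 ν := rfl

section Series

variable {σ R : Type*} [CommRing R]

theorem coeff_one_sub_X_mul (i : σ) (ν : σ →₀ ℕ) (q : MvPowerSeries σ R) :
    coeff ν ((1 - X i) * q) =
      coeff ν q - if single i 1 ≤ ν then coeff (ν - single i 1) q else 0 := by
  rw [sub_mul, one_mul, map_sub, X_def, coeff_monomial_mul, one_mul]

theorem coeff_prod_one_sub_X_mul_eq_zero {s : Finset σ} {i : σ} (hi : i ∉ s) {n : ℕ}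
    {q : MvPowerSeries σ R} (hq : ∀ ν, n < ν i → coeff ν q = 0) :
    ∀ ν, n < ν i → coeff ν ((∏ j ∈ s, (1 - X j)) * q) = 0 := by
  classical
  induction s using Finset.induction with
  | empty => simpa using hq
  | insert j s hj ih =>
    intro ν hν
    have hji : j ≠ i := fun h => hi (h ▸ Finset.mem_insert_self j s)
    rw [Finset.prod_insert hj, mul_assoc, coeff_one_sub_X_mul,
      ih (fun h => hi (Finset.mem_insert_of_mem h)) ν hν]
    split_ifs
    · rw [ih (fun h => hi (Finset.mem_insert_of_mem h)) _
        (by simpa [single_eq_of_ne hji.symm]), sub_zero]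
    · simp

theorem finite_support_prod_one_sub_X_mul_indicatorSeries [Fintype σ] {L : Set (σ →₀ ℕ)}
    (hL : IsLowerSet L) :
    (Function.support fun ν => coeff ν ((∏ i, (1 - X i)) * indicatorSeries R L)).Finite := by
  classical
  obtain ⟨B, hB⟩ := hL.exists_tsub_single_mem_iff
  refine (Set.finite_Iic B).subset fun ν hν => ?_
  by_contra hνB
  obtain ⟨i, hi⟩ : ∃ i, B i < ν i := by simpa [Finsupp.le_def] using hνB
  refine hν ?_
  rw [← Finset.prod_erase_mul _ _ (Finset.mem_univ i), mul_assoc]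
  refine coeff_prod_one_sub_X_mul_eq_zero (Finset.notMem_erase i _) (fun μ hμ => ?_) ν hi
  have hle : single i 1 ≤ μ := by
    rw [single_le_iff]
    omega
  rw [coeff_one_sub_X_mul, if_pos hle, coeff_indicatorSeries, coeff_indicatorSeries]
  simp [Set.indicator_apply, hB μ i hμ]

end Series

namespace MonomialOrder

variable {σ M : Type*} (ord : MonomialOrder σ)

def leastInFiber (φ : (σ →₀ ℕ) → M) : Set (σ →₀ ℕ) :=
  {ν | ∀ ν', φ ν' = φ ν → ord.toSyn ν ≤ ord.toSyn ν'}

theorem isLowerSet_leastInFiber {F : Type*} [AddCommMonoid M] [FunLike F (σ →₀ ℕ) M]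
    [AddMonoidHomClass F (σ →₀ ℕ) M] (φ : F) : IsLowerSet (ord.leastInFiber φ) := by
  intro ν μ hμν hν μ' hμ'
  obtain ⟨δ, rfl⟩ := exists_add_of_le hμν
  have := hν (μ' + δ) (by rw [map_add, map_add, hμ'])
  rw [map_add, map_add] at this
  exact le_of_add_le_add_right this

theorem existsUnique_leastInFiber (φ : (σ →₀ ℕ) → M) {m : M} (hm : m ∈ Set.range φ) :
    ∃! ν, ν ∈ ord.leastInFiber φ ∧ φ ν = m := by
  obtain ⟨ν, hν, hmin⟩ := (InvImage.wf ord.toSyn wellFounded_lt).has_min {ν | φ ν = m} hm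
  refine ⟨ν, ⟨fun ν' hν' => not_lt.1 (hmin ν' (hν'.trans hν)), hν⟩, ?_⟩
  rintro ν' ⟨hν'min, hν'⟩
  exact ord.toSyn.injective <|
    le_antisymm (hν'min ν (hν.trans hν'.symm)) (not_lt.1 (hmin ν' hν'))

end MonomialOrder

section Subst

variable {σ τ R : Type*} [CommRing R]

theorem hasSubst_monomial_one [Finite σ] {a : σ → τ →₀ ℕ} (ha : ∀ i, a i ≠ 0) :
    HasSubst fun i => monomial (a i) (1 : R) :=
  hasSubst_of_constantCoeff_zero fun i => by
    classical
    rw [← coeff_zero_eq_constantCoeff_apply, coeff_monomial, if_neg (ha i).symm]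

theorem coeff_subst_monomial_one [DecidableEq τ] {a : σ → τ →₀ ℕ}
    (ha : HasSubst fun i => monomial (a i) (1 : R))
    (f : MvPowerSeries σ R) (m : τ →₀ ℕ) :
    coeff m (subst (fun i => monomial (a i) (1 : R)) f) =
      ∑ᶠ ν, if linearCombination ℕ a ν = m then coeff ν f else 0 := by
  rw [coeff_subst ha]
  congr 1
  ext ν
  have : (ν.prod fun i e => monomial (a i) (1 : R) ^ e) =
      monomial (linearCombination ℕ a ν) 1 := by
    simp only [Finsupp.prod, monomial_pow, one_pow, prod_monomial, Finset.prod_const_one,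
      linearCombination_apply, Finsupp.sum]
  by_cases h : linearCombination ℕ a ν = m
  · simp [this, h]
  · simp [this, h, coeff_monomial, Ne.symm h]

theorem support_coeff_subst_monomial_one_subset {a : σ → τ →₀ ℕ}
    (ha : HasSubst fun i => monomial (a i) (1 : R)) (f : MvPowerSeries σ R) :
    (Function.support fun m => coeff m (subst (fun i => monomial (a i) (1 : R)) f)) ⊆
      linearCombination ℕ a '' Function.support fun ν => coeff ν f := by
  classical
  intro m hm
  rw [Function.mem_support, coeff_subst_monomial_one ha] at hm
  by_contra hmf
  refine hm (finsum_eq_zero_of_forall_eq_zero fun ν => ?_)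
  split_ifs with hν
  · by_contra h
    exact hmf ⟨ν, h, hν⟩
  · rfl

theorem subst_indicatorSeries_leastInFiber
    (ord : MonomialOrder σ) {a : σ → τ →₀ ℕ}
    (ha : HasSubst fun i => monomial (a i) (1 : R)) :
    subst (fun i => monomial (a i) (1 : R))
        (indicatorSeries R (ord.leastInFiber (linearCombination ℕ a))) =
      indicatorSeries R (Set.range (linearCombination ℕ a)) := by
  classical
  ext m
  simp only [coeff_subst_monomial_one ha, coeff_indicatorSeries]
  by_cases hm : m ∈ Set.range (linearCombination ℕ a)
  · obtain ⟨ν, ⟨hνL, hν⟩, huniq⟩ := ord.existsUnique_leastInFiber _ hm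
    rw [finsum_eq_single _ ν fun ν' hν' => ?_]
    · rw [if_pos hν, Set.indicator_of_mem hνL, Set.indicator_of_mem hm,
        Pi.one_apply, Pi.one_apply]
    · split_ifs with hν'm
      · exact Set.indicator_of_notMem (fun hν'L => hν' (huniq ν' ⟨hν'L, hν'm⟩)) _
      · rfl
  · rw [Set.indicator_of_notMem hm]
    exact finsum_eq_zero_of_forall_eq_zero fun ν => if_neg fun hν => hm ⟨ν, hν⟩

end Subst

open scoped Classical in
theorem stmt_15 (k d : ℕ) (a : Fin d → (Fin k →₀ ℕ)) (ha : ∀ i, a i ≠ 0)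
    (f : MvPowerSeries (Fin k) ℤ)
    (hf : ∀ m : Fin k →₀ ℕ, MvPowerSeries.coeff m f =
      if ∃ μ : Fin d → ℕ, m = ∑ i, μ i • a i then 1 else 0) :
    {m : Fin k →₀ ℕ | MvPowerSeries.coeff m
      ((∏ i, (1 - ∏ j, (MvPowerSeries.X j : MvPowerSeries (Fin k) ℤ) ^ (a i j))) * f)
        ≠ 0}.Finite := by
  have hx : HasSubst fun i => monomial (a i) (1 : ℤ) := hasSubst_monomial_one ha
  have hprod : ∏ i, (1 - ∏ j, (X j : MvPowerSeries (Fin k) ℤ) ^ a i j) =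
      subst (fun i => monomial (a i) (1 : ℤ)) (∏ i, (1 - X i : MvPowerSeries (Fin d) ℤ)) := by
    rw [← coe_substAlgHom hx, map_prod]
    refine Finset.prod_congr rfl fun i _ => ?_
    rw [map_sub, map_one, coe_substAlgHom, subst_X hx, monomial_one_eq,
      Finsupp.prod_fintype _ _ fun _ => pow_zero _]
  have hf_eq : f = indicatorSeries ℤ (Set.range (linearCombination ℕ a)) := by
    ext m
    have hS : (∃ μ : Fin d → ℕ, m = ∑ i, μ i • a i) ↔
        m ∈ Set.range (linearCombination ℕ a) := by
      rw [← LinearMap.coe_range, range_linearCombination, SetLike.mem_coe,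
        Submodule.mem_span_range_iff_exists_fun]
      simp only [eq_comm]
    rw [hf, coeff_indicatorSeries, Set.indicator_apply]
    simp only [hS, Pi.one_apply]
  rw [hprod, hf_eq, ← subst_indicatorSeries_leastInFiber MonomialOrder.lex hx, ← subst_mul hx]
  exact ((finite_support_prod_one_sub_X_mul_indicatorSeries
    (MonomialOrder.isLowerSet_leastInFiber _ _)).image _).subset
    (support_coeff_subst_monomial_one_subset hx _)
end

section
/- Let a₁, …, a_d ∈ ℕ^k be nonzero vectors and define T : ℤ^d → ℤ^k by T(μ₁, …, μ_d) = μ₁a₁ + ⋯ + μ_d a_d. Order ℤ^d lexicographically by its coordinates, and call z ∈ ℤ^d lex-positive if z is lexicographically greater than 0. Suppose (x₁, y₁), …, (x_r, y_r) ∈ ℕ^d × ℕ^d generate the additive monoid {(x, y) ∈ ℕ^d × ℕ^d : T(x) = T(y)}, and for each index i with x_i ≠ y_i let z_i be whichever of x_i − y_i and y_i − x_i is lex-positive. Then for every z ∈ ℕ^d, z is the lexicographically least element of the fiber {y ∈ ℕ^d : T(y) = T(z)} if and only if there is no index i with x_i ≠ y_i such that z − z_i ∈ ℕ^d (i.e.,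 z − z_i has all coordinates non-negative). -/
/-!
If `w - z_i ≥ 0`, then `w - z_i` lies in the fiber of `w` (since `T z_i = 0`) and is
lexicographically smaller, so `w` is not the least element. Conversely, if some `y` in the fiber
is lexicographically smaller than `w`, then `(w, y)` lies in the monoid, hence is a sum of
generators. In the lexicographically ordered group `ℤ^d` a sum of lex-nonpositive vectors is
lex-nonpositive, so one generator `(x_i, y_i)` occurring in the sum has `x_i - y_i = z_i`
lex-positive; as it is a summand, `x_i ≤ w`, i.e. `w - z_i = (w - x_i) + y_i ≥ 0`.
-/

/-- `v ∈ ℤ^d` is lexicographically positive: at the first coordinate where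
`v` differs from `0`, it is positive. -/
def LexPos {d : ℕ} (v : Fin d → ℤ) : Prop :=
  ∃ j : Fin d, (∀ j' : Fin d, j' < j → v j' = 0) ∧ 0 < v j

theorem lexPos_iff_pos_toLex {d : ℕ} (v : Fin d → ℤ) : LexPos v ↔ 0 < toLex v :=
  exists_congr fun _ => and_congr_left' <| forall₂_congr fun _ _ => eq_comm

theorem lexPos_natCast_sub_iff {d : ℕ} (u v : Fin d → ℕ) :
    LexPos (fun j => (u j : ℤ) - v j) ↔ toLex v < toLex u := by
  simp only [LexPos, sub_eq_zero, sub_pos, Nat.cast_inj, Nat.cast_lt]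
  exact exists_congr fun _ => and_congr_left' <| forall₂_congr fun _ _ => eq_comm

namespace LexPos

variable {d : ℕ} {v : Fin d → ℤ}

theorem ne_zero (hv : LexPos v) : v ≠ 0 := by
  rintro rfl
  obtain ⟨_, -, hj⟩ := hv
  exact hj.false

theorem not_neg (hv : LexPos v) : ¬LexPos (-v) := by
  rw [lexPos_iff_pos_toLex] at hv ⊢
  rw [toLex_neg, neg_pos]
  exact hv.asymm

end LexPos

theorem AddSubmonoid.exists_mem_pos_le_of_mem_closure {A G : Type*} [AddCommMonoid A]
    [PartialOrder A] [CanonicallyOrderedAdd A] [AddCommMonoid G] [LinearOrder G]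
    [IsOrderedAddMonoid G] (f : A →+ G) {S : Set A} {p : A} (hp : p ∈ closure S)
    (hpos : 0 < f p) : ∃ s ∈ S, 0 < f s ∧ s ≤ p := by
  induction hp using closure_induction with
  | mem s hs => exact ⟨s, hs, hpos, le_rfl⟩
  | zero => exact absurd hpos (by simp)
  | add p q _ _ ihp ihq =>
    rw [map_add] at hpos
    rcases lt_or_ge 0 (f p) with hp | hp
    · obtain ⟨s, hs, hfs, hle⟩ := ihp hp
      exact ⟨s, hs, hfs, hle.trans le_self_add⟩
    · obtain ⟨s, hs, hfs, hle⟩ := ihq <| lt_of_not_ge fun hq => hpos.not_ge (add_nonpos hp hq)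
      exact ⟨s, hs, hfs, hle.trans le_add_self⟩

def lexSub (ι : Type*) : (ι → ℕ) × (ι → ℕ) →+ Lex (ι → ℤ) where
  toFun p := toLex fun i => (p.1 i : ℤ) - p.2 i
  map_zero' := congrArg toLex <| funext fun _ => by simp
  map_add' p q := by
    rw [← toLex_add]
    refine congrArg toLex <| funext fun _ => ?_
    simp only [Prod.fst_add, Prod.snd_add, Pi.add_apply]
    push_cast
    ring

theorem exists_le_lexPos_sub_of_mem_closure {d : ℕ} {ι : Type*} (x y : ι → Fin d → ℕ)
    {u v : Fin d → ℕ} (huv : (u, v) ∈ AddSubmonoid.closure (Set.range fun i => (x i, y i)))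
    (hvu : toLex v < toLex u) : ∃ i, x i ≤ u ∧ LexPos (fun j => (x i j : ℤ) - y i j) := by
  have hpos : 0 < lexSub (Fin d) (u, v) :=
    (lexPos_iff_pos_toLex _).1 ((lexPos_natCast_sub_iff u v).2 hvu)
  obtain ⟨_, ⟨i, rfl⟩, hi, hle⟩ :=
    AddSubmonoid.exists_mem_pos_le_of_mem_closure (lexSub (Fin d)) huv hpos
  exact ⟨i, hle.1, (lexPos_iff_pos_toLex _).2 hi⟩

theorem exists_mem_fiber_ne_not_lexPos_sub {d : ℕ} {G : Type*} [AddGroup G]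
    (L : (Fin d → ℤ) →+ G) {v : Fin d → ℤ} (hv : LexPos v) (hLv : L v = 0) {w : Fin d → ℕ}
    (hwv : ∀ j, 0 ≤ (w j : ℤ) - v j) :
    ∃ y : Fin d → ℕ, L (fun j => (y j : ℤ)) = L (fun j => (w j : ℤ)) ∧ y ≠ w ∧
      ¬LexPos (fun j => (y j : ℤ) - w j) := by
  obtain ⟨y, hy⟩ : ∃ y : Fin d → ℕ, (fun j => (y j : ℤ)) = (fun j => (w j : ℤ)) - v :=
    ⟨fun j => ((w j : ℤ) - v j).toNat, funext fun j => Int.toNat_of_nonneg (hwv j)⟩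
  have hyw : (fun j => (y j : ℤ) - w j) = -v := by
    funext j
    simp [congrFun hy j]
  refine ⟨y, by rw [hy, map_sub, hLv, sub_zero], ?_, hyw ▸ hv.not_neg⟩
  rintro rfl
  exact hv.ne_zero (neg_eq_zero.1 (hyw.symm.trans (funext fun _ => sub_self _)))

theorem stmt_16_general (k d : ℕ) (a : Fin d → Fin k → ℕ)
    (T : (Fin d → ℤ) → (Fin k → ℤ))
    (hT : ∀ μ : Fin d → ℤ, T μ = fun j => ∑ i, μ i * (a i j : ℤ))
    (r : ℕ) (xg yg : Fin r → (Fin d → ℕ))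
    (hgen : ∀ p : (Fin d → ℕ) × (Fin d → ℕ),
      p ∈ AddSubmonoid.closure (Set.range fun i => (xg i, yg i)) ↔
        T (fun j => (p.1 j : ℤ)) = T (fun j => (p.2 j : ℤ)))
    (z : Fin r → Fin d → ℤ)
    (hz : ∀ i : Fin r, xg i ≠ yg i →
      ((z i = fun j => (xg i j : ℤ) - (yg i j : ℤ)) ∨
        (z i = fun j => (yg i j : ℤ) - (xg i j : ℤ))) ∧ LexPos (z i)) :
    ∀ w : Fin d → ℕ,
      (∀ y : Fin d → ℕ, T (fun j => (y j : ℤ)) = T (fun j => (w j : ℤ)) →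
          y = w ∨ LexPos (fun j => (y j : ℤ) - (w j : ℤ)))
        ↔ ¬∃ i : Fin r, xg i ≠ yg i ∧ ∀ j, 0 ≤ (w j : ℤ) - z i j := by
  let L : (Fin d → ℤ) →+ (Fin k → ℤ) := AddMonoidHom.mk' T fun u v =>
    funext fun m => by simp [hT, add_mul, Finset.sum_add_distrib]
  intro w
  constructor
  · rintro hmin ⟨i, hne, hwz⟩
    obtain ⟨hzi, hzpos⟩ := hz i hne
    have hgi : L _ = L _ := (hgen (xg i, yg i)).1 (AddSubmonoid.subset_closure ⟨i, rfl⟩)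
    have hLz : L (z i) = 0 := by
      rcases hzi with h | h <;> rw [h] <;> exact (map_sub L _ _).trans (by simp [hgi])
    obtain ⟨y, hLy, hyw, hnp⟩ := exists_mem_fiber_ne_not_lexPos_sub L hzpos hLz hwz
    exact (hmin y hLy).elim hyw hnp
  · rintro hno y hTy
    by_contra! ⟨hyw, hnp⟩
    rw [lexPos_natCast_sub_iff] at hnp
    obtain ⟨i, hle, hi⟩ := exists_le_lexPos_sub_of_mem_closure xg yg
      ((hgen (w, y)).2 hTy.symm) ((le_of_not_gt hnp).lt_of_ne (toLex_inj.not.2 hyw))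
    have hne : xg i ≠ yg i := fun h => hi.ne_zero (funext fun j => by simp [h])
    obtain ⟨hzi, hzpos⟩ := hz i hne
    have hzx := hzi.resolve_right fun h => by
      rw [h, lexPos_natCast_sub_iff] at hzpos
      exact ((lexPos_natCast_sub_iff _ _).1 hi).asymm hzpos
    refine hno ⟨i, hne, fun j => ?_⟩
    have hxw : xg i j ≤ w j := hle j
    simp only [hzx]
    omega

theorem stmt_16 (k d : ℕ) (a : Fin d → Fin k → ℕ) (ha : ∀ i, a i ≠ 0)
    (T : (Fin d → ℤ) → (Fin k → ℤ))
    (hT : ∀ μ : Fin d → ℤ, T μ = fun j => ∑ i, μ i * (a i j : ℤ))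
    (r : ℕ) (xg yg : Fin r → (Fin d → ℕ))
    (hgen : ∀ p : (Fin d → ℕ) × (Fin d → ℕ),
      p ∈ AddSubmonoid.closure (Set.range fun i => (xg i, yg i)) ↔
        T (fun j => (p.1 j : ℤ)) = T (fun j => (p.2 j : ℤ)))
    (z : Fin r → Fin d → ℤ)
    (hz : ∀ i : Fin r, xg i ≠ yg i →
      ((z i = fun j => (xg i j : ℤ) - (yg i j : ℤ)) ∨
        (z i = fun j => (yg i j : ℤ) - (xg i j : ℤ))) ∧ LexPos (z i)) :
    ∀ w : Fin d → ℕ,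
      (∀ y : Fin d → ℕ, T (fun j => (y j : ℤ)) = T (fun j => (w j : ℤ)) →
          y = w ∨ LexPos (fun j => (y j : ℤ) - (w j : ℤ)))
        ↔ ¬∃ i : Fin r, xg i ≠ yg i ∧ ∀ j, 0 ≤ (w j : ℤ) - z i j :=
  stmt_16_general k d a T hT r xg yg hgen z hz
end
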